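/- arXiv:2103.07891 — 8 statements merged into one kernel-verified Lean document; each statement's English description precedes it below -/
import Mathlib

section
/- Let D be a nonempty subset of a real Hilbert space H, let T₁, …, T_m : D → D be strictly quasi-nonexpansive with ⋂_{i=1}^m Fix(T_i) ≠ ∅, and set T = T₁T₂⋯T_m (composition). Then T is strictly quasi-nonexpansive and Fix(T) = ⋂_{i=1}^m Fix(T_i). -/
section Aux
variable {H : Type*} [NormedAddCommGroup H] {D : Set H} {z : H}

private def comp' (L : List (H → H)) (x : H) : H := L.foldr (fun f y => f y) x

private lemma comp'_cons (f : H → H) (L : List (H → H)) (x : H) :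
    comp' (f :: L) x = f (comp' L x) := rfl

private lemma comp'_mem (L : List (H → H)) (h : ∀ f ∈ L, Set.MapsTo f D D) :
    ∀ x ∈ D, comp' L x ∈ D := by
  induction L with
  | nil => intro x hx; exact hx
  | cons f L ih =>
    intro x hx
    exact h f (List.mem_cons_self ..) (ih (fun g hg => h g (List.mem_cons_of_mem _ hg)) x hx)

private lemma comp'_le (hz : z ∈ D) (L : List (H → H))
    (h : ∀ f ∈ L, Set.MapsTo f D D ∧ (∀ x ∈ D, ‖f x - z‖ ≤ ‖x - z‖) ∧
      (∀ x ∈ D, f x ≠ x → ‖f x - z‖ < ‖x - z‖)) :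
    ∀ x ∈ D, ‖comp' L x - z‖ ≤ ‖x - z‖ := by
  induction L with
  | nil => intro x hx; exact le_refl _
  | cons f L ih =>
    intro x hx
    have hL := fun g hg => h g (List.mem_cons_of_mem _ hg)
    have hu : comp' L x ∈ D := comp'_mem L (fun g hg => (hL g hg).1) x hx
    calc ‖f (comp' L x) - z‖ ≤ ‖comp' L x - z‖ :=
          (h f (List.mem_cons_self ..)).2.1 _ hu
      _ ≤ ‖x - z‖ := ih hL x hx

private lemma comp'_lt (hz : z ∈ D) (L : List (H → H))
    (h : ∀ f ∈ L, Set.MapsTo f D D ∧ (∀ x ∈ D, ‖f x - z‖ ≤ ‖x - z‖) ∧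
      (∀ x ∈ D, f x ≠ x → ‖f x - z‖ < ‖x - z‖)) :
    ∀ x ∈ D, comp' L x ≠ x → ‖comp' L x - z‖ < ‖x - z‖ := by
  induction L with
  | nil => intro x hx hne; exact absurd rfl hne
  | cons f L ih =>
    intro x hx hne
    have hL := fun g hg => h g (List.mem_cons_of_mem _ hg)
    have hu : comp' L x ∈ D := comp'_mem L (fun g hg => (hL g hg).1) x hx
    rw [comp'_cons] at hne ⊢
    by_cases hxu : comp' L x = x
    · rw [hxu] at hne ⊢
      exact (h f (List.mem_cons_self ..)).2.2 x hx hne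
    · calc ‖f (comp' L x) - z‖ ≤ ‖comp' L x - z‖ :=
            (h f (List.mem_cons_self ..)).2.1 _ hu
        _ < ‖x - z‖ := ih hL x hx hxu

private lemma comp'_fix_forward (L : List (H → H)) (x : H)
    (h : ∀ f ∈ L, f x = x) : comp' L x = x := by
  induction L with
  | nil => rfl
  | cons f L ih =>
    rw [comp'_cons, ih (fun g hg => h g (List.mem_cons_of_mem _ hg))]
    exact h f (List.mem_cons_self ..)

private lemma comp'_fix_backward (hz : z ∈ D) (L : List (H → H))
    (h : ∀ f ∈ L, Set.MapsTo f D D ∧ (∀ x ∈ D, ‖f x - z‖ ≤ ‖x - z‖) ∧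
      (∀ x ∈ D, f x ≠ x → ‖f x - z‖ < ‖x - z‖)) :
    ∀ y ∈ D, comp' L y = y → ∀ f ∈ L, f y = y := by
  induction L with
  | nil => intro y _ _ f hf; exact absurd hf List.not_mem_nil
  | cons f L ih =>
    intro y hy hfix g hg
    have hL := fun g hg => h g (List.mem_cons_of_mem _ hg)
    rw [comp'_cons] at hfix
    have hu : comp' L y ∈ D := comp'_mem L (fun g hg => (hL g hg).1) y hy
    have huy : comp' L y = y := by
      by_contra huy
      have h1 : ‖comp' L y - z‖ < ‖y - z‖ := comp'_lt hz L hL y hy huy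
      have h2 : ‖f (comp' L y) - z‖ ≤ ‖comp' L y - z‖ :=
        (h f (List.mem_cons_self ..)).2.1 _ hu
      rw [hfix] at h2
      exact absurd (h2.trans_lt h1) (lt_irrefl _)
    rcases List.mem_cons.mp hg with hg | hg
    · subst hg; rw [huy] at hfix; exact hfix
    · exact ih hL y hy huy g hg

end Aux

theorem stmt_4 {H : Type*} [NormedAddCommGroup H] [InnerProductSpace ℝ H] [CompleteSpace H]
    (D : Set H) (hne : D.Nonempty) (m : ℕ) (hm : 0 < m)
    (T : Fin m → H → H) (hmaps : ∀ i, Set.MapsTo (T i) D D)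
    (hQNE : ∀ i, ∀ x ∈ D, ∀ y ∈ D, T i y = y → ‖T i x - y‖ ≤ ‖x - y‖)
    (hsQNE : ∀ i, ∀ x ∈ D, T i x ≠ x → ∀ y ∈ D, T i y = y → ‖T i x - y‖ < ‖x - y‖)
    (hF : {x | x ∈ D ∧ ∀ i, T i x = x}.Nonempty)
    (S : H → H) (hS : S = fun x => (List.ofFn T).foldr (fun f y => f y) x) :
    (∀ x ∈ D, ∀ y ∈ D, S y = y → ‖S x - y‖ ≤ ‖x - y‖) ∧
    (∀ x ∈ D, S x ≠ x → ∀ y ∈ D, S y = y → ‖S x - y‖ < ‖x - y‖) ∧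
    {x | x ∈ D ∧ S x = x} = {x | x ∈ D ∧ ∀ i, T i x = x} := by
  obtain ⟨z, hzD, hzfix⟩ := hF
  have hScomp : ∀ x, S x = comp' (List.ofFn T) x := by intro x; rw [hS]; rfl
  -- bundle hypothesis for any common fixed point w
  have bundle : ∀ w ∈ D, (∀ i, T i w = w) →
      ∀ f ∈ List.ofFn T, Set.MapsTo f D D ∧ (∀ x ∈ D, ‖f x - w‖ ≤ ‖x - w‖) ∧
        (∀ x ∈ D, f x ≠ x → ‖f x - w‖ < ‖x - w‖) := by
    intro w hwD hwfix f hf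
    obtain ⟨i, rfl⟩ := (List.mem_ofFn ..).mp hf
    exact ⟨hmaps i, fun x hx => hQNE i x hx w hwD (hwfix i),
      fun x hx hne => hsQNE i x hx hne w hwD (hwfix i)⟩
  -- Fix(S) = common fixed points
  have hfixeq : {x | x ∈ D ∧ S x = x} = {x | x ∈ D ∧ ∀ i, T i x = x} := by
    ext y
    simp only [Set.mem_setOf_eq]
    constructor
    · rintro ⟨hyD, hfix⟩
      refine ⟨hyD, fun i => ?_⟩
      have := comp'_fix_backward hzD (List.ofFn T) (bundle z hzD hzfix) y hyD
        (by rw [← hScomp]; exact hfix) (T i) (by simp [List.mem_ofFn])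
      exact this
    · rintro ⟨hyD, hfix⟩
      refine ⟨hyD, ?_⟩
      rw [hScomp]
      apply comp'_fix_forward
      intro f hf
      obtain ⟨i, rfl⟩ := (List.mem_ofFn ..).mp hf
      exact hfix i
  refine ⟨?_, ?_, hfixeq⟩
  · intro x hx y hy hyfix
    have hy' : ∀ i, T i y = y := ((Set.ext_iff.mp hfixeq y).mp ⟨hy, hyfix⟩).2
    rw [hScomp]
    exact comp'_le hy (List.ofFn T) (bundle y hy hy') x hx
  · intro x hx hne y hy hyfix
    have hy' : ∀ i, T i y = y := ((Set.ext_iff.mp hfixeq y).mp ⟨hy, hyfix⟩).2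
    rw [hScomp]
    exact comp'_lt hy (List.ofFn T) (bundle y hy hy') x hx (by rw [← hScomp]; exact hne)
end

section
/- Let D be a nonempty subset of a real Hilbert space H, let T₁, …, T_m : D → D be quasi-nonexpansive with ⋂_{i=1}^m Fix(T_i) ≠ ∅, and let w₁, …, w_m be strictly positive real numbers with ∑_{i=1}^m w_i = 1. Then Fix(∑_{i=1}^m w_i T_i) = ⋂_{i=1}^m Fix(T_i). -/
theorem stmt_5 {H : Type*} [NormedAddCommGroup H] [InnerProductSpace ℝ H] [CompleteSpace H]
    (D : Set H) (hne : D.Nonempty) (m : ℕ) (hm : 0 < m)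
    (T : Fin m → H → H) (hmaps : ∀ i, Set.MapsTo (T i) D D)
    (hQNE : ∀ i, ∀ x ∈ D, ∀ y ∈ D, T i y = y → ‖T i x - y‖ ≤ ‖x - y‖)
    (hF : {x | x ∈ D ∧ ∀ i, T i x = x}.Nonempty)
    (w : Fin m → ℝ) (hw : ∀ i, 0 < w i) (hw1 : ∑ i, w i = 1) :
    {x | x ∈ D ∧ (∑ i, w i • T i x) = x} = {x | x ∈ D ∧ ∀ i, T i x = x} := by
  obtain ⟨y, hyD, hyfix⟩ := hF
  ext x
  simp only [Set.mem_setOf_eq]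
  constructor
  · rintro ⟨hxD, hx⟩
    refine ⟨hxD, fun i => ?_⟩
    set r : ℝ := ‖x - y‖ with hr
    have hnorm : ∀ j, ‖T j x - y‖ ≤ r := fun j => hQNE j x hxD y hyD (hyfix j)
    have hsum : ∑ j, w j • (T j x - y) = x - y := by
      have : ∑ j, w j • (T j x - y) = (∑ j, w j • T j x) - (∑ j, w j) • y := by
        rw [Finset.sum_smul]
        rw [← Finset.sum_sub_distrib]
        congr 1
        ext j
        rw [smul_sub]
      rw [this, hx, hw1, one_smul]
    have hinner_le : ∀ j, inner ℝ (T j x - y) (x - y) ≤ r ^ 2 := by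
      intro j
      calc inner ℝ (T j x - y) (x - y) ≤ ‖T j x - y‖ * ‖x - y‖ := real_inner_le_norm _ _
        _ ≤ r * r := by
            apply mul_le_mul (hnorm j) le_rfl (norm_nonneg _) (norm_nonneg _)
        _ = r ^ 2 := (sq r).symm
    have hsum_inner : ∑ j, w j * inner ℝ (T j x - y) (x - y) = r ^ 2 := by
      have : inner ℝ (∑ j, w j • (T j x - y)) (x - y) = (r : ℝ) ^ 2 := by
        rw [hsum, real_inner_self_eq_norm_sq]
      rw [← this, sum_inner]
      congr 1; ext j; rw [real_inner_smul_left]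
    have heq : ∀ j ∈ Finset.univ, w j * inner ℝ (T j x - y) (x - y) = w j * r ^ 2 := by
      have hle : ∀ j ∈ Finset.univ, w j * inner ℝ (T j x - y) (x - y) ≤ w j * r ^ 2 :=
        fun j _ => mul_le_mul_of_nonneg_left (hinner_le j) (hw j).le
      have hsums : ∑ j, w j * inner ℝ (T j x - y) (x - y) = ∑ j, w j * r ^ 2 := by
        rw [hsum_inner, ← Finset.sum_mul, hw1, one_mul]
      exact fun j hj => ((Finset.sum_eq_sum_iff_of_le hle).mp hsums j hj)
    have hinner_eq : inner ℝ (T i x - y) (x - y) = (r : ℝ) ^ 2 :=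
      mul_left_cancel₀ (hw i).ne' (heq i (Finset.mem_univ i))
    have hzero : ‖(T i x - y) - (x - y)‖ ^ 2 ≤ 0 := by
      rw [norm_sub_sq_real, hinner_eq, ← hr]
      have := hnorm i
      nlinarith [norm_nonneg (T i x - y)]
    have h2 : ‖(T i x - y) - (x - y)‖ = 0 :=
      le_antisymm (by nlinarith [norm_nonneg ((T i x - y) - (x - y))]) (norm_nonneg _)
    have h3 : T i x - y = x - y := sub_eq_zero.mp (norm_eq_zero.mp h2)
    exact sub_left_injective h3
  · rintro ⟨hxD, hfix⟩
    refine ⟨hxD, ?_⟩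
    have : ∑ j, w j • T j x = ∑ j, w j • x := by
      congr 1; ext j; rw [hfix j]
    rw [this, ← Finset.sum_smul, hw1, one_smul]
end

section
/- Let D be a nonempty closed convex subset of a real Hilbert space H and let (T_i)_{i=1}^m be firmly nonexpansive self-maps of D with F := ⋂_{i=1}^m Fix(T_i) ≠ ∅. Let Ω be a finite fit set of index vectors over {1,…,m} and w : Ω → (0,1] with ∑_{t∈Ω} w(t) = 1. For an index vector t = (t₁,…,t_q), let T[t] := T_{t_q} ∘ ⋯ ∘ T_{t₁}, and let T := ∑_{t∈Ω} w(t) T[t]. Then Fix(T) = ⋂_{i=1}^m Fix(T_i). -/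
open scoped InnerProductSpace

theorem stmt_6 {H : Type*} [NormedAddCommGroup H] [InnerProductSpace ℝ H] [CompleteSpace H]
    (D : Set H) (hne : D.Nonempty) (hcl : IsClosed D) (hconv : Convex ℝ D)
    (m : ℕ) (hm : 0 < m)
    (T : Fin m → H → H) (hmaps : ∀ i, Set.MapsTo (T i) D D)
    (hFNE : ∀ i, ∀ x ∈ D, ∀ y ∈ D, ‖T i x - T i y‖ ^ 2 ≤ ⟪x - y, T i x - T i y⟫_ℝ)
    (hF : {x | x ∈ D ∧ ∀ i, T i x = x}.Nonempty)
    (Ω : Finset (List (Fin m))) (hfit : ∀ i : Fin m, ∃ t ∈ Ω, i ∈ t)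
    (w : List (Fin m) → ℝ) (hw : ∀ t ∈ Ω, 0 < w t ∧ w t ≤ 1)
    (hw1 : ∑ t ∈ Ω, w t = 1) :
    {x | x ∈ D ∧ (∑ t ∈ Ω, w t • t.foldl (fun y i => T i y) x) = x} =
      {x | x ∈ D ∧ ∀ i, T i x = x} := by
  obtain ⟨z, hzD, hz⟩ := hF
  set S : List (Fin m) → H → H := fun t x => t.foldl (fun y i => T i y) x with hS
  -- each T i is nonexpansive
  have hne1 : ∀ i, ∀ x ∈ D, ∀ y ∈ D, ‖T i x - T i y‖ ≤ ‖x - y‖ := by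
    intro i x hx y hy
    have h := hFNE i x hx y hy
    have hcs : ⟪x - y, T i x - T i y⟫_ℝ ≤ ‖x - y‖ * ‖T i x - T i y‖ :=
      real_inner_le_norm _ _
    rcases eq_or_lt_of_le (norm_nonneg (T i x - T i y)) with h0 | h0
    · rw [← h0]; exact norm_nonneg _
    · nlinarith
  -- strings map D to D
  have hSmem : ∀ t, ∀ x ∈ D, S t x ∈ D := by
    intro t
    induction t with
    | nil => intro x hx; exact hx
    | cons i s ih => intro x hx; exact ih _ (hmaps i hx)
  -- strings fix z
  have hSz : ∀ t, S t z = z := by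
    intro t
    induction t with
    | nil => rfl
    | cons i s ih =>
      show S s (T i z) = z
      rw [hz i]; exact ih
  -- string nonexpansiveness w.r.t. z
  have hSle : ∀ t, ∀ x ∈ D, ‖S t x - z‖ ≤ ‖x - z‖ := by
    intro t
    induction t with
    | nil => intro x hx; exact le_refl _
    | cons i s ih =>
      intro x hx
      calc ‖S (i :: s) x - z‖ = ‖S s (T i x) - z‖ := rfl
        _ ≤ ‖T i x - z‖ := ih _ (hmaps i hx)
        _ = ‖T i x - T i z‖ := by rw [hz i]
        _ ≤ ‖x - z‖ := hne1 i x hx z hzD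
  -- firm nonexpansiveness quantitative step
  have hfirm : ∀ i, ∀ y ∈ D, ‖T i y - z‖ ^ 2 + ‖y - T i y‖ ^ 2 ≤ ‖y - z‖ ^ 2 := by
    intro i y hy
    have h := hFNE i y hy z hzD
    rw [hz i] at h
    have e1 : ‖y - T i y‖ ^ 2
        = ‖y - z‖ ^ 2 - 2 * ⟪y - z, T i y - z⟫_ℝ + ‖T i y - z‖ ^ 2 := by
      have e : y - T i y = (y - z) - (T i y - z) := by abel
      rw [e, @norm_sub_sq_real]
    nlinarith
  -- key : fixed point of a string is fixed by each letter
  have hkey : ∀ t, ∀ x ∈ D, S t x = x → ∀ i ∈ t, T i x = x := by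
    intro t
    induction t with
    | nil => intro x hx h i hi; simp at hi
    | cons j s ih =>
      intro x hx h i hi
      have hstep : S s (T j x) = x := h
      have h1 : ‖x - z‖ ≤ ‖T j x - z‖ := by
        calc ‖x - z‖ = ‖S s (T j x) - z‖ := by rw [hstep]
          _ ≤ ‖T j x - z‖ := hSle s _ (hmaps j hx)
      have h2 : ‖T j x - z‖ ≤ ‖x - z‖ := by
        have h3 := hne1 j x hx z hzD; rwa [hz j] at h3
      have heq : ‖T j x - z‖ = ‖x - z‖ := le_antisymm h2 h1
      have hfix : T j x = x := by
        have h3 := hfirm j x hx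
        have heq2 : ‖T j x - z‖ ^ 2 = ‖x - z‖ ^ 2 := by rw [heq]
        have h5 : ‖x - T j x‖ ^ 2 = 0 :=
          le_antisymm (by linarith) (sq_nonneg _)
        have h4 : ‖x - T j x‖ = 0 := (pow_eq_zero_iff two_ne_zero).mp h5
        have := sub_eq_zero.mp (norm_eq_zero.mp h4)
        exact this.symm
      rcases List.mem_cons.mp hi with rfl | hi'
      · exact hfix
      · exact ih x hx (by rwa [hfix] at hstep) i hi'
  ext x
  simp only [Set.mem_setOf_eq]
  constructor
  · rintro ⟨hxD, hsum⟩
    refine ⟨hxD, ?_⟩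
    have hsum' : ∑ t ∈ Ω, w t • S t x = x := hsum
    have hxz : x - z = ∑ t ∈ Ω, w t • (S t x - z) := by
      simp only [smul_sub, Finset.sum_sub_distrib, ← Finset.sum_smul, hw1, hsum', one_smul]
    have hexp : ‖x - z‖ ^ 2 = ∑ t ∈ Ω, w t * ⟪S t x - z, x - z⟫_ℝ := by
      have : ⟪x - z, x - z⟫_ℝ = ∑ t ∈ Ω, w t * ⟪S t x - z, x - z⟫_ℝ := by
        nth_rewrite 1 [hxz]
        rw [sum_inner]
        exact Finset.sum_congr rfl fun t ht => real_inner_smul_left _ _ _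
      rw [← real_inner_self_eq_norm_sq, this]
    have hboundt : ∀ t ∈ Ω, w t * ⟪S t x - z, x - z⟫_ℝ ≤ w t * ‖x - z‖ ^ 2 := by
      intro t ht
      have hcs : ⟪S t x - z, x - z⟫_ℝ ≤ ‖S t x - z‖ * ‖x - z‖ := real_inner_le_norm _ _
      have hle := hSle t x hxD
      have hwt := (hw t ht).1
      have hmain : ⟪S t x - z, x - z⟫_ℝ ≤ ‖x - z‖ ^ 2 := by
        nlinarith [norm_nonneg (x - z), norm_nonneg (S t x - z)]
      exact mul_le_mul_of_nonneg_left hmain hwt.le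
    have htot : ∑ t ∈ Ω, w t * ‖x - z‖ ^ 2 = ∑ t ∈ Ω, w t * ⟪S t x - z, x - z⟫_ℝ := by
      rw [← hexp, ← Finset.sum_mul, hw1, one_mul]
    have heach := (Finset.sum_eq_sum_iff_of_le hboundt).mp htot.symm
    have hfixall : ∀ t ∈ Ω, S t x = x := by
      intro t ht
      have hwt := (hw t ht).1
      have hinn : ⟪S t x - z, x - z⟫_ℝ = ‖x - z‖ ^ 2 :=
        (mul_left_cancel₀ (ne_of_gt hwt) (heach t ht))
      have hle := hSle t x hxD
      have hnsq : ‖(S t x - z) - (x - z)‖ ^ 2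
          = ‖S t x - z‖ ^ 2 - 2 * ⟪S t x - z, x - z⟫_ℝ + ‖x - z‖ ^ 2 :=
        @norm_sub_sq_real _ _ _ _ _
      have h0 : ‖(S t x - z) - (x - z)‖ = 0 := by
        nlinarith [norm_nonneg ((S t x - z) - (x - z)), norm_nonneg (x - z),
          norm_nonneg (S t x - z)]
      have he : S t x - z - (x - z) = S t x - x := by abel
      rw [he] at h0
      exact sub_eq_zero.mp (norm_eq_zero.mp h0)
    intro i
    obtain ⟨t, ht, hit⟩ := hfit i
    exact hkey t x hxD (hfixall t ht) i hit
  · rintro ⟨hxD, hfix⟩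
    refine ⟨hxD, ?_⟩
    have hSfix : ∀ t, S t x = x := by
      intro t
      induction t with
      | nil => rfl
      | cons i s ih =>
        show S s (T i x) = x
        rw [hfix i]; exact ih
    calc ∑ t ∈ Ω, w t • S t x = ∑ t ∈ Ω, w t • x := by
          exact Finset.sum_congr rfl fun t ht => by rw [hSfix t]
      _ = (∑ t ∈ Ω, w t) • x := by rw [Finset.sum_smul]
      _ = x := by rw [hw1, one_smul]
end

section
/- Let D be a nonempty closed convex subset of a real Hilbert space H and let (T_i)_{i=1}^m be firmly nonexpansive self-maps of D with F := ⋂_{i=1}^m Fix(T_i) ≠ ∅. Fix a fit finite set Ω of index vectors with weights w : Ω → (0,1] summing to 1, a steering sequence (λ_k), and points u, x⁰ ∈ D. Then the sequence defined by x^{k+1} = λ_k u + (1 − λ_k) ∑_{t∈Ω} w(t) T[t](x^k) converges strongly to P_F(u), the metric projection of u onto F. -/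
open Filter

private lemma xu_aux {a b lam : ℕ → ℝ} {c : ℕ → ℝ} {N : ℕ} {ε : ℝ}
    (ha : ∀ k, 0 ≤ a k) (hlam : ∀ k, 0 ≤ lam k ∧ lam k ≤ 1)
    (hb : ∀ k, 0 ≤ b k)
    (hc : ∀ k, N ≤ k → c k ≤ ε) (hε : 0 ≤ ε)
    (hrec : ∀ k, a (k+1) ≤ (1 - lam k) * a k + lam k * c k + b k) :
    ∀ n : ℕ, a (N + n) ≤ (∏ j ∈ Finset.Ico N (N + n), (1 - lam j)) * a N + ε
      + ∑ j ∈ Finset.Ico N (N + n), b j := by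
  intro n
  induction n with
  | zero => simp [ha N, hε]
  | succ n ih =>
    have h1 : a (N + n + 1) ≤ (1 - lam (N+n)) * a (N+n) + lam (N+n) * c (N+n) + b (N+n) :=
      hrec (N+n)
    have hc' : c (N+n) ≤ ε := hc _ (Nat.le_add_right _ _)
    have h0 : 0 ≤ 1 - lam (N+n) := by linarith [(hlam (N+n)).2]
    have hlnn : 0 ≤ lam (N+n) := (hlam (N+n)).1
    have hP : 0 ≤ ∏ j ∈ Finset.Ico N (N + n), (1 - lam j) :=
      Finset.prod_nonneg (fun j _ => by linarith [(hlam j).2])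
    have hB : 0 ≤ ∑ j ∈ Finset.Ico N (N + n), b j := Finset.sum_nonneg fun j _ => hb j
    have key : a (N + n + 1) ≤ (1 - lam (N+n)) * ((∏ j ∈ Finset.Ico N (N + n), (1 - lam j)) * a N + ε
        + ∑ j ∈ Finset.Ico N (N + n), b j) + lam (N+n) * ε + b (N+n) := by
      calc a (N + n + 1) ≤ (1 - lam (N+n)) * a (N+n) + lam (N+n) * c (N+n) + b (N+n) := h1
        _ ≤ _ := by
          have h2 := mul_le_mul_of_nonneg_left ih h0
          have h3 := mul_le_mul_of_nonneg_left hc' hlnn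
          linarith
    rw [show N + (n+1) = (N+n)+1 by ring,
      Finset.prod_Ico_succ_top (Nat.le_add_right _ _),
      Finset.sum_Ico_succ_top (Nat.le_add_right _ _)]
    nlinarith [mul_nonneg (mul_nonneg h0 hP) (ha N), mul_nonneg h0 hB,
      mul_nonneg hP (ha N)]

private lemma xu_lemma {a b c lam : ℕ → ℝ}
    (ha : ∀ k, 0 ≤ a k) (hlam : ∀ k, 0 ≤ lam k ∧ lam k ≤ 1)
    (hdiv : ¬ Summable lam)
    (hb : ∀ k, 0 ≤ b k) (hbsum : Summable b)
    (hc : ∀ ε : ℝ, 0 < ε → ∃ N, ∀ k, N ≤ k → c k ≤ ε)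
    (hrec : ∀ k, a (k+1) ≤ (1 - lam k) * a k + lam k * c k + b k) :
    Tendsto a atTop (nhds 0) := by
  rw [Metric.tendsto_atTop]
  intro ε hε
  set δ := ε / 4 with hδ
  have hδpos : 0 < δ := by positivity
  obtain ⟨N1, hN1⟩ := hc δ hδpos
  have htail : Tendsto (fun i => ∑' k, b (k + i)) atTop (nhds 0) := tendsto_sum_nat_add b
  obtain ⟨N2, hN2⟩ := (Metric.tendsto_atTop.1 htail) δ hδpos
  set N := max N1 N2 with hN
  have hbtail : ∀ n, ∑ j ∈ Finset.Ico N (N + n), b j ≤ δ := by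
    intro n
    have h1 : ∑ j ∈ Finset.Ico N (N + n), b j = ∑ j ∈ Finset.range n, b (j + N) := by
      rw [Finset.sum_Ico_eq_sum_range]
      simp only [Nat.add_sub_cancel_left]
      exact Finset.sum_congr rfl fun i _ => by rw [Nat.add_comm]
    rw [h1]
    have hs : Summable fun k => b (k + N) := (summable_nat_add_iff N).2 hbsum
    have hle : ∑ j ∈ Finset.range n, b (j + N) ≤ ∑' k, b (k + N) :=
      Summable.sum_le_tsum _ (fun j _ => hb _) hs
    have h2 := hN2 N (le_max_right _ _)
    rw [Real.dist_eq, sub_zero] at h2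
    have habs : ∑' k, b (k + N) ≤ δ := le_of_lt (lt_of_abs_lt h2)
    linarith
  have hεN : ∀ k, N ≤ k → c k ≤ δ := fun k hk => hN1 k (le_trans (le_max_left _ _) hk)
  have hkey := xu_aux ha hlam hb hεN hδpos.le hrec
  have hsum : Tendsto (fun n => ∑ i ∈ Finset.range n, lam i) atTop atTop :=
    (not_summable_iff_tendsto_nat_atTop_of_nonneg (fun n => (hlam n).1)).1 hdiv
  -- ∑_{Ico N (N+n)} lam → ∞
  have hsum2 : Tendsto (fun n => ∑ j ∈ Finset.Ico N (N + n), lam j) atTop atTop := by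
    have heq : ∀ n, ∑ j ∈ Finset.Ico N (N + n), lam j
        = ∑ i ∈ Finset.range (N + n), lam i - ∑ i ∈ Finset.range N, lam i := by
      intro n
      exact Finset.sum_Ico_eq_sub lam (Nat.le_add_right _ _)
    simp only [heq]
    have hNn : Tendsto (fun n => N + n) atTop atTop :=
      tendsto_atTop_mono (fun n => Nat.le_add_left n N) tendsto_id
    have h1 : Tendsto (fun n => ∑ i ∈ Finset.range (N + n), lam i) atTop atTop :=
      hsum.comp hNn
    exact tendsto_atTop_add_const_right atTop _ h1
  have hprodle : ∀ n, (∏ j ∈ Finset.Ico N (N + n), (1 - lam j))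
      ≤ Real.exp (-(∑ j ∈ Finset.Ico N (N + n), lam j)) := by
    intro n
    have : Real.exp (-(∑ j ∈ Finset.Ico N (N + n), lam j))
        = ∏ j ∈ Finset.Ico N (N + n), Real.exp (-(lam j)) := by
      rw [← Real.exp_sum, ← Finset.sum_neg_distrib]
    rw [this]
    apply Finset.prod_le_prod (fun j _ => by linarith [(hlam j).2])
    intro j _
    have := Real.add_one_le_exp (-(lam j))
    linarith
  -- conclude
  have hexp0 : Tendsto (fun n => Real.exp (-(∑ j ∈ Finset.Ico N (N + n), lam j)) * a N) atTop (nhds 0) := by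
    have h1 : Tendsto (fun n => Real.exp (-(∑ j ∈ Finset.Ico N (N + n), lam j))) atTop (nhds 0) :=
      Real.tendsto_exp_atBot.comp (tendsto_neg_atTop_atBot.comp hsum2)
    simpa using h1.mul_const (a N)
  obtain ⟨N3, hN3⟩ := (Metric.tendsto_atTop.1 hexp0) δ hδpos
  refine ⟨N + N3, fun k hk => ?_⟩
  obtain ⟨n, rfl⟩ : ∃ n, k = N + n := ⟨k - N, by omega⟩
  have hn3 : N3 ≤ n := by omega
  have h4 := hN3 n hn3
  rw [Real.dist_eq, sub_zero] at h4
  have h5 : Real.exp (-(∑ j ∈ Finset.Ico N (N + n), lam j)) * a N < δ := lt_of_abs_lt h4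
  have h6 : (∏ j ∈ Finset.Ico N (N + n), (1 - lam j)) * a N
      ≤ Real.exp (-(∑ j ∈ Finset.Ico N (N + n), lam j)) * a N :=
    mul_le_mul_of_nonneg_right (hprodle n) (ha N)
  have h7 := hkey n
  have h8 := hbtail n
  rw [Real.dist_eq, sub_zero]
  have h9 : a (N + n) < 3 * δ := by linarith
  rw [abs_of_nonneg (ha _)]
  calc a (N + n) < 3 * δ := h9
    _ < ε := by rw [hδ]; linarith

private lemma normsq_add_le {H : Type*} [NormedAddCommGroup H] [InnerProductSpace ℝ H]
    (a b : H) : ‖a + b‖^2 ≤ ‖a‖^2 + 2*(inner ℝ b (a+b) : ℝ) := by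
  have h1 := norm_add_sq_real a b
  have h2 : (inner ℝ b (a+b) : ℝ) = inner ℝ b a + inner ℝ b b := inner_add_right b a b
  have h3 : (inner ℝ b b : ℝ) = ‖b‖^2 := real_inner_self_eq_norm_sq b
  have h4 : (inner ℝ a b : ℝ) = inner ℝ b a := real_inner_comm b a
  nlinarith [sq_nonneg ‖b‖]

private lemma real_mono_ineq {α β s r ip : ℝ} (hα : 0 < α) (hαβ : α ≤ β)
    (hs : 0 ≤ s) (hr : 0 ≤ r) (H1 : α*s^2 + β*r^2 ≤ (α+β)*ip) (H2 : ip ≤ s*r) :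
    r^2 ≤ ip := by
  rcases le_or_gt r s with h | h
  · have h1 : α*r^2 + β*r^2 ≤ α*s^2 + β*r^2 := by nlinarith [mul_le_mul_of_nonneg_left (mul_self_le_mul_self hr h) hα.le]
    have h2 : 0 < α + β := by linarith
    nlinarith
  · exfalso
    have h1 : 0 < β := lt_of_lt_of_le hα hαβ
    have h2 : α*s < β*r := by nlinarith
    nlinarith [mul_pos (sub_pos.2 h) (sub_pos.2 h2)]

private lemma inner_expand {H : Type*} [NormedAddCommGroup H] [InnerProductSpace ℝ H]
    (al be : ℝ) (a b : H) :
    (inner ℝ (al • a - be • b) (b - a) : ℝ)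
      = (al + be) * (inner ℝ a b : ℝ) - al*‖a‖^2 - be*‖b‖^2 := by
  rw [inner_sub_left, inner_sub_right, inner_sub_right, real_inner_smul_left,
    real_inner_smul_left, real_inner_smul_left, real_inner_smul_left,
    real_inner_self_eq_norm_sq, real_inner_self_eq_norm_sq, real_inner_comm b a]
  ring

private lemma path_mono {H : Type*} [NormedAddCommGroup H] [InnerProductSpace ℝ H]
    (al be : ℝ) (hal0 : 0 < al) (halbe : al ≤ be) (u z y Sz Sy : H)
    (h1 : z - Sz = al • (u - z)) (h2 : y - Sy = be • (u - y))
    (hne : (inner ℝ (Sz - Sy) (z - y) : ℝ) ≤ ‖z - y‖^2) :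
    ‖u - y‖^2 + ‖z - y‖^2 ≤ ‖u - z‖^2 := by
  have hm : 0 ≤ (inner ℝ ((z - Sz) - (y - Sy)) (z - y) : ℝ) := by
    have he : (z - Sz) - (y - Sy) = (z - y) - (Sz - Sy) := by abel
    rw [he, inner_sub_left, real_inner_self_eq_norm_sq]
    linarith
  rw [h1, h2, show z - y = (u - y) - (u - z) by abel, inner_expand] at hm
  have H1 : al * ‖u - z‖^2 + be * ‖u - y‖^2 ≤ (al + be) * (inner ℝ (u - z) (u - y) : ℝ) := by
    linarith
  have H2 : (inner ℝ (u - z) (u - y) : ℝ) ≤ ‖u - z‖ * ‖u - y‖ := real_inner_le_norm _ _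
  have hkey : ‖u - y‖^2 ≤ (inner ℝ (u - z) (u - y) : ℝ) :=
    real_mono_ineq hal0 halbe (norm_nonneg _) (norm_nonneg _) H1 H2
  have hexp2 : ‖z - y‖^2 = ‖u - y‖^2 - 2*(inner ℝ (u - y) (u - z) : ℝ) + ‖u - z‖^2 := by
    rw [show z - y = (u - y) - (u - z) by abel]
    exact norm_sub_sq_real _ _
  have hcomm : (inner ℝ (u - y) (u - z) : ℝ) = (inner ℝ (u - z) (u - y) : ℝ) := real_inner_comm _ _
  rw [hexp2, hcomm]
  linarith

private lemma master_real {t d e sz ip : ℝ} (ht0 : 0 ≤ t) (ht1 : t ≤ 1)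
    (hd : 0 ≤ d) (he : 0 ≤ e) (hsz : 0 ≤ sz) (hsze : sz ≤ d + e)
    (h2 : d^2 ≤ (1-t)^2 * sz^2 + 2*(t*(ip + d^2))) :
    2*t*(-ip) ≤ t^2*d^2 + 2*d*e + e^2 := by
  have hA : sz^2 ≤ (d+e)^2 := by nlinarith
  have h1t : 0 ≤ (1-t)^2 := sq_nonneg _
  have hB : (1-t)^2 * sz^2 ≤ (1-t)^2*(d+e)^2 := mul_le_mul_of_nonneg_left hA h1t
  have hC : (1-t)^2 ≤ 1 := by nlinarith
  have hE : 0 ≤ 2*d*e + e^2 := by positivity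
  have hD : (1-t)^2*(2*d*e+e^2) ≤ 2*d*e + e^2 := by nlinarith
  nlinarith [hB, hD]

private lemma proj_var {H : Type*} [NormedAddCommGroup H] [InnerProductSpace ℝ H]
    (u p q : H) (h : ‖p - q‖^2 ≤ (inner ℝ (u - q) (p - q) : ℝ)) :
    (inner ℝ (u - p) (q - p) : ℝ) ≤ 0 ∧ ‖u - p‖ ≤ ‖u - q‖ := by
  have h1 : (inner ℝ (u - p) (q - p) : ℝ) = (inner ℝ (u - q) (q - p) : ℝ) + (inner ℝ (q - p) (q - p) : ℝ) := by
    rw [← inner_add_left]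
    congr 1
    abel
  have h2 : (inner ℝ (u - q) (q - p) : ℝ) = -(inner ℝ (u - q) (p - q) : ℝ) := by
    rw [show q - p = -(p - q) by abel, inner_neg_right]
  have h3 : (inner ℝ (q - p) (q - p) : ℝ) = ‖q - p‖^2 := real_inner_self_eq_norm_sq _
  have h4 : ‖q - p‖ = ‖p - q‖ := norm_sub_rev _ _
  have hv : (inner ℝ (u - p) (q - p) : ℝ) ≤ 0 := by
    rw [h1, h2, h3, h4]
    linarith
  refine ⟨hv, ?_⟩
  have h5 : ‖u - q‖^2 = ‖u - p‖^2 - 2*(inner ℝ (u - p) (q - p) : ℝ) + ‖q - p‖^2 := by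
    rw [show u - q = (u - p) - (q - p) by abel]
    exact norm_sub_sq_real _ _
  nlinarith [norm_nonneg (u - q), norm_nonneg (u - p), sq_nonneg ‖q - p‖]

open scoped InnerProductSpace
open Filter


open scoped InnerProductSpace
open Filter

set_option maxHeartbeats 4000000 in
theorem stmt_8 {H : Type*} [NormedAddCommGroup H] [InnerProductSpace ℝ H] [CompleteSpace H]
    (D : Set H) (hne : D.Nonempty) (hcl : IsClosed D) (hconv : Convex ℝ D)
    (m : ℕ) (hm : 0 < m)
    (T : Fin m → H → H) (hmaps : ∀ i, Set.MapsTo (T i) D D)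
    (hFNE : ∀ i, ∀ x ∈ D, ∀ y ∈ D, ‖T i x - T i y‖ ^ 2 ≤ ⟪x - y, T i x - T i y⟫_ℝ)
    (F : Set H) (hFdef : F = {x | x ∈ D ∧ ∀ i, T i x = x}) (hF : F.Nonempty)
    (Ω : Finset (List (Fin m))) (hfit : ∀ i : Fin m, ∃ t ∈ Ω, i ∈ t)
    (w : List (Fin m) → ℝ) (hw : ∀ t ∈ Ω, 0 < w t ∧ w t ≤ 1)
    (hw1 : ∑ t ∈ Ω, w t = 1)
    (lam : ℕ → ℝ) (hlam01 : ∀ k, lam k ∈ Set.Icc (0 : ℝ) 1)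
    (hlam0 : Filter.Tendsto lam Filter.atTop (nhds 0))
    (hlamdiv : ¬ Summable lam)
    (hlamvar : Summable fun k => |lam (k + 1) - lam k|)
    (u : H) (hu : u ∈ D) (x : ℕ → H) (hx0 : x 0 ∈ D)
    (hiter : ∀ k, x (k + 1) =
      lam k • u + (1 - lam k) • ∑ t ∈ Ω, w t • t.foldl (fun y i => T i y) (x k)) :
    ∃ p ∈ F, (∀ z ∈ F, ‖u - p‖ ≤ ‖u - z‖) ∧
      Filter.Tendsto x Filter.atTop (nhds p) := by
  obtain ⟨q0, hq0⟩ := hF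
  have hq0D : q0 ∈ D := by rw [hFdef] at hq0; exact hq0.1
  set Tl : List (Fin m) → H → H := fun t y => t.foldl (fun z i => T i z) y with hTldef
  set S : H → H := fun y => ∑ t ∈ Ω, w t • Tl t y with hSdef
  -- T i is nonexpansive on D
  have hTne : ∀ i, ∀ a ∈ D, ∀ b ∈ D, ‖T i a - T i b‖ ≤ ‖a - b‖ := by
    intro i a ha b hb
    have h1 := hFNE i a ha b hb
    have h2 : ⟪a - b, T i a - T i b⟫_ℝ ≤ ‖a - b‖ * ‖T i a - T i b‖ := real_inner_le_norm _ _
    nlinarith [norm_nonneg (T i a - T i b), norm_nonneg (a - b)]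
  -- foldl facts
  have hTlD : ∀ (t : List (Fin m)), ∀ y ∈ D, Tl t y ∈ D := by
    intro t
    induction t with
    | nil => intro y hy; exact hy
    | cons i t ih => intro y hy; exact ih _ (hmaps i hy)
  have hTlne : ∀ (t : List (Fin m)), ∀ a ∈ D, ∀ b ∈ D, ‖Tl t a - Tl t b‖ ≤ ‖a - b‖ := by
    intro t
    induction t with
    | nil => intro a _ b _; exact le_refl _
    | cons i t ih =>
      intro a ha b hb
      calc ‖Tl t (T i a) - Tl t (T i b)‖ ≤ ‖T i a - T i b‖ :=
            ih _ (hmaps i ha) _ (hmaps i hb)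
        _ ≤ ‖a - b‖ := hTne i a ha b hb
  have hTlfix : ∀ (t : List (Fin m)), ∀ p ∈ F, Tl t p = p := by
    intro t
    induction t with
    | nil => intro p _; rfl
    | cons i t ih =>
      intro p hp
      have hip : T i p = p := by rw [hFdef] at hp; exact hp.2 i
      show Tl t (T i p) = p
      rw [hip]; exact ih p hp
  have hwnn : ∀ t ∈ Ω, (0:ℝ) ≤ w t := fun t ht => (hw t ht).1.le
  have hSD : ∀ y ∈ D, S y ∈ D := by
    intro y hy
    exact Convex.sum_mem hconv hwnn hw1 (fun t _ => hTlD t y hy)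
  have hSne : ∀ a ∈ D, ∀ b ∈ D, ‖S a - S b‖ ≤ ‖a - b‖ := by
    intro a ha b hb
    have h1 : S a - S b = ∑ t ∈ Ω, w t • (Tl t a - Tl t b) := by
      simp [hSdef, smul_sub, Finset.sum_sub_distrib]
    rw [h1]
    calc ‖∑ t ∈ Ω, w t • (Tl t a - Tl t b)‖ ≤ ∑ t ∈ Ω, ‖w t • (Tl t a - Tl t b)‖ :=
          norm_sum_le _ _
      _ ≤ ∑ t ∈ Ω, w t * ‖a - b‖ := by
          apply Finset.sum_le_sum
          intro t ht
          rw [norm_smul, Real.norm_eq_abs, abs_of_nonneg (hwnn t ht)]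
          exact mul_le_mul_of_nonneg_left (hTlne t a ha b hb) (hwnn t ht)
      _ = ‖a - b‖ := by rw [← Finset.sum_mul, hw1, one_mul]
  have hSfix : ∀ p ∈ F, S p = p := by
    intro p hp
    have : S p = ∑ t ∈ Ω, w t • p := by
      apply Finset.sum_congr rfl
      intro t ht; rw [hTlfix t p hp]
    rw [this, ← Finset.sum_smul, hw1, one_smul]
  -- fixed points of S in D are in F
  have hTq0 : ∀ i, T i q0 = q0 := by rw [hFdef] at hq0; exact hq0.2
  -- chain argument: norm preserved along a word implies every letter fixes the point
  have hchain : ∀ (t : List (Fin m)), ∀ y ∈ D, ‖Tl t y - q0‖ = ‖y - q0‖ →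
      (∀ i ∈ t, T i y = y) ∧ Tl t y = y := by
    intro t
    induction t with
    | nil => intro y _ _; exact ⟨by simp, rfl⟩
    | cons i t ih =>
      intro y hy heqn
      have heqn' : ‖Tl t (T i y) - q0‖ = ‖y - q0‖ := heqn
      have h1 : ‖Tl t (T i y) - q0‖ ≤ ‖T i y - q0‖ := by
        have h := hTlne t (T i y) (hmaps i hy) q0 hq0D
        rwa [hTlfix t q0 hq0] at h
      have h2 : ‖T i y - q0‖ ≤ ‖y - q0‖ := by
        have h := hTne i y hy q0 hq0D
        rwa [hTq0 i] at h
      have h3 : ‖T i y - q0‖ = ‖y - q0‖ := le_antisymm h2 (by rw [← heqn']; exact h1)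
      have h4 := hFNE i y hy q0 hq0D
      rw [hTq0 i] at h4
      have h5 : T i y = y := by
        have hexp : ‖T i y - y‖^2 = ‖T i y - q0‖^2 - 2*⟪T i y - q0, y - q0⟫_ℝ + ‖y - q0‖^2 := by
          rw [show T i y - y = (T i y - q0) - (y - q0) by abel]
          exact norm_sub_sq_real _ _
        have hcomm : ⟪T i y - q0, y - q0⟫_ℝ = ⟪y - q0, T i y - q0⟫_ℝ := real_inner_comm _ _
        rw [h3] at h4
        have h6 : ‖T i y - y‖^2 ≤ 0 := by
          rw [hexp, hcomm, h3]
          linarith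
        have h7 : ‖T i y - y‖ = 0 := by nlinarith [norm_nonneg (T i y - y)]
        have := norm_eq_zero.1 h7
        exact sub_eq_zero.1 this
      have heqn2 : ‖Tl t y - q0‖ = ‖y - q0‖ := by
        conv_lhs => rw [← h5]
        exact heqn'
      obtain ⟨hall, hfixt⟩ := ih y hy heqn2
      constructor
      · intro j hj
        rcases List.mem_cons.1 hj with hji | hj2
        · rw [hji]; exact h5
        · exact hall j hj2
      · show Tl t (T i y) = y
        rw [h5]; exact hfixt
  have hfixS : ∀ z ∈ D, S z = z → z ∈ F := by
    intro z hzD hSz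
    have hTlz : ∀ t ∈ Ω, Tl t z = z := by
      have hr : ∀ t ∈ Ω, w t * ⟪z - q0, Tl t z - q0⟫_ℝ ≤ w t * ‖z - q0‖^2 := by
        intro t ht
        apply mul_le_mul_of_nonneg_left _ (hwnn t ht)
        calc ⟪z - q0, Tl t z - q0⟫_ℝ ≤ ‖z - q0‖ * ‖Tl t z - q0‖ := real_inner_le_norm _ _
          _ ≤ ‖z - q0‖ * ‖z - q0‖ := by
              apply mul_le_mul_of_nonneg_left _ (norm_nonneg _)
              have h := hTlne t z hzD q0 hq0D
              rwa [hTlfix t q0 hq0] at h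
          _ = ‖z - q0‖^2 := by ring
      have hsum : ∑ t ∈ Ω, w t * ⟪z - q0, Tl t z - q0⟫_ℝ = ∑ t ∈ Ω, w t * ‖z - q0‖^2 := by
        have h0 : q0 = ∑ t ∈ Ω, w t • q0 := by rw [← Finset.sum_smul, hw1, one_smul]
        have h1 : S z - q0 = ∑ t ∈ Ω, w t • (Tl t z - q0) := by
          conv_lhs => rw [h0]
          rw [show S z = ∑ t ∈ Ω, w t • Tl t z from rfl, ← Finset.sum_sub_distrib]
          exact Finset.sum_congr rfl fun t _ => (smul_sub _ _ _).symm
        have h2 : ⟪z - q0, S z - q0⟫_ℝ = ∑ t ∈ Ω, w t * ⟪z - q0, Tl t z - q0⟫_ℝ := by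
          rw [h1, inner_sum]
          exact Finset.sum_congr rfl fun t _ => real_inner_smul_right _ _ _
        have h3 : ∑ t ∈ Ω, w t * ‖z - q0‖^2 = ‖z - q0‖^2 := by
          rw [← Finset.sum_mul, hw1, one_mul]
        rw [← h2, hSz, real_inner_self_eq_norm_sq, h3]
      have heq := (Finset.sum_eq_sum_iff_of_le hr).1 hsum
      intro t ht
      have h4 : ⟪z - q0, Tl t z - q0⟫_ℝ = ‖z - q0‖^2 :=
        mul_left_cancel₀ (ne_of_gt (hw t ht).1) (heq t ht)
      have h5 : ‖Tl t z - q0‖ ≤ ‖z - q0‖ := by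
        have h := hTlne t z hzD q0 hq0D
        rwa [hTlfix t q0 hq0] at h
      have hexp : ‖Tl t z - z‖^2 = ‖Tl t z - q0‖^2 - 2*⟪Tl t z - q0, z - q0⟫_ℝ + ‖z - q0‖^2 := by
        rw [show Tl t z - z = (Tl t z - q0) - (z - q0) by abel]
        exact norm_sub_sq_real _ _
      have hcomm : ⟪Tl t z - q0, z - q0⟫_ℝ = ⟪z - q0, Tl t z - q0⟫_ℝ := real_inner_comm _ _
      have h6 : ‖Tl t z - z‖^2 ≤ 0 := by
        rw [hexp, hcomm, h4]
        nlinarith [pow_le_pow_left₀ (norm_nonneg (Tl t z - q0)) h5 2]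
      have h7 : ‖Tl t z - z‖ = 0 := by nlinarith [norm_nonneg (Tl t z - z)]
      exact sub_eq_zero.1 (norm_eq_zero.1 h7)
    rw [hFdef]
    refine ⟨hzD, fun i => ?_⟩
    obtain ⟨t, ht, hit⟩ := hfit i
    have hnorm : ‖Tl t z - q0‖ = ‖z - q0‖ := by rw [hTlz t ht]
    exact (hchain t z hzD hnorm).1 i hit
  -- Browder path
  set tq : ℕ → ℝ := fun n => 1 / (n + 2 : ℝ) with htqdef
  have htq_pos : ∀ n, 0 < tq n := by
    intro n
    apply div_pos one_pos
    positivity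
  have htq_le : ∀ n, tq n ≤ 1/2 := by
    intro n
    apply div_le_div_of_nonneg_left one_pos.le two_pos
    · exact le_add_of_nonneg_left (Nat.cast_nonneg n)
  have htq_lt1 : ∀ n, tq n < 1 := fun n => lt_of_le_of_lt (htq_le n) (by norm_num)
  haveI : CompleteSpace D := hcl.completeSpace_coe
  haveI : Nonempty D := hne.to_subtype
  have hzex : ∀ n : ℕ, ∃ z ∈ D, z = tq n • u + (1 - tq n) • S z := by
    intro n
    set t := tq n
    have ht0 : 0 < t := htq_pos n
    have ht1 : t < 1 := htq_lt1 n
    have hmem : ∀ y : D, t • u + (1 - t) • S y.1 ∈ D := fun y =>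
      hconv hu (hSD _ y.2) ht0.le (by linarith) (by ring)
    set g : D → D := fun y => ⟨t • u + (1 - t) • S y.1, hmem y⟩ with hgdef
    have hK : (0:ℝ) ≤ 1 - t := by linarith
    set K : NNReal := ⟨1 - t, hK⟩ with hKdef
    have hlip : LipschitzWith K g := by
      apply LipschitzWith.of_dist_le_mul
      intro a b
      have h1 : dist (g a) (g b) = ‖(1-t) • S a.1 - (1-t) • S b.1‖ := by
        rw [Subtype.dist_eq, dist_eq_norm]
        congr 1
        show t • u + (1 - t) • S a.1 - (t • u + (1 - t) • S b.1) = _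
        abel
      rw [h1, ← smul_sub, norm_smul, Real.norm_eq_abs, abs_of_nonneg hK,
        Subtype.dist_eq, dist_eq_norm]
      exact mul_le_mul_of_nonneg_left (hSne _ a.2 _ b.2) hK
    have hcontr : ContractingWith K g := by
      constructor
      · show (K:ℝ) < 1
        show (1:ℝ) - t < 1
        linarith
      · exact hlip
    set z0 := hcontr.fixedPoint g with hz0
    have hfix : g z0 = z0 := hcontr.fixedPoint_isFixedPt
    refine ⟨z0.1, z0.2, ?_⟩
    conv_lhs => rw [← hfix]
  choose zs hzsD hzseq using hzex
  -- basic path inequalities (for arbitrary points of F)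
  have hFD : ∀ q ∈ F, q ∈ D := by intro q hq; rw [hFdef] at hq; exact hq.1
  have hzq : ∀ n, ∀ q ∈ F, ‖zs n - q‖^2 ≤ ⟪u - q, zs n - q⟫_ℝ := by
    intro n q hq
    have ht0 : 0 < tq n := htq_pos n
    have ht1 : tq n < 1 := htq_lt1 n
    set t := tq n with htdef
    set z := zs n with hzdef
    have hzeq : z = t • u + (1 - t) • S z := hzseq n
    have hsplit : z - q = t • (u - q) + (1 - t) • (S z - q) := by
      nth_rewrite 1 [hzeq]
      module
    have key : t * ⟪u - q, z - q⟫_ℝ + (1-t) * ⟪S z - q, z - q⟫_ℝ = ‖z - q‖^2 := by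
      rw [← real_inner_smul_left, ← real_inner_smul_left, ← inner_add_left, ← hsplit,
        real_inner_self_eq_norm_sq]
    have hCz : ⟪S z - q, z - q⟫_ℝ ≤ ‖z - q‖^2 := by
      calc ⟪S z - q, z - q⟫_ℝ ≤ ‖S z - q‖ * ‖z - q‖ := real_inner_le_norm _ _
        _ ≤ ‖z - q‖ * ‖z - q‖ := by
            apply mul_le_mul_of_nonneg_right _ (norm_nonneg _)
            have h := hSne z (hzsD n) q (hFD q hq)
            rwa [hSfix q hq] at h
        _ = ‖z - q‖^2 := by ring
    nlinarith [mul_le_mul_of_nonneg_left hCz (by linarith : (0:ℝ) ≤ 1 - t)]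
  have hz_le : ∀ n, ∀ q ∈ F, ‖zs n - q‖ ≤ ‖u - q‖ := by
    intro n q hq
    have h1 := hzq n q hq
    have h2 : ⟪u - q, zs n - q⟫_ℝ ≤ ‖u - q‖ * ‖zs n - q‖ := real_inner_le_norm _ _
    nlinarith [norm_nonneg (zs n - q), norm_nonneg (u - q)]
  have hz_ub : ∀ n, ∀ q ∈ F, ‖u - zs n‖^2 ≤ ‖u - q‖^2 := by
    intro n q hq
    have h1 := hzq n q hq
    have hexp : ‖u - zs n‖^2 = ‖u - q‖^2 - 2*⟪u - q, zs n - q⟫_ℝ + ‖zs n - q‖^2 := by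
      rw [show u - zs n = (u - q) - (zs n - q) by abel]
      exact norm_sub_sq_real _ _
    nlinarith [norm_nonneg (zs n - q)]
  have hasyz : ∀ n, ‖zs n - S (zs n)‖ ≤ tq n * (2 * ‖u - q0‖) := by
    intro n
    set t := tq n with htdef
    set z := zs n with hzdef
    have hzeq : z = t • u + (1 - t) • S z := hzseq n
    have hd : z - S z = t • (u - S z) := by
      nth_rewrite 1 [hzeq]
      module
    rw [hd, norm_smul, Real.norm_eq_abs, abs_of_nonneg (htq_pos n).le]
    apply mul_le_mul_of_nonneg_left _ (htq_pos n).le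
    have h1 : ‖S z - q0‖ ≤ ‖u - q0‖ := by
      have h := hSne z (hzsD n) q0 hq0D
      rw [hSfix q0 hq0] at h
      exact le_trans h (hz_le n q0 hq0)
    calc ‖u - S z‖ = ‖(u - q0) + (q0 - S z)‖ := by rw [show u - S z = (u - q0) + (q0 - S z) by abel]
      _ ≤ ‖u - q0‖ + ‖q0 - S z‖ := norm_add_le _ _
      _ = ‖u - q0‖ + ‖S z - q0‖ := by rw [norm_sub_rev q0 (S z)]
      _ ≤ 2 * ‖u - q0‖ := by linarith
  -- monotonicity of the path
  have hmono : ∀ n n', n ≤ n' → ‖u - zs n‖^2 + ‖zs n' - zs n‖^2 ≤ ‖u - zs n'‖^2 := by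
    intro n n' hnn'
    have hlm0 : 0 < tq n' := htq_pos n'
    have hmu0 : 0 < tq n := htq_pos n
    have hlm1 : tq n' < 1 := htq_lt1 n'
    have hmu1 : tq n < 1 := htq_lt1 n
    have hlmu : tq n' ≤ tq n := by
      apply div_le_div_of_nonneg_left one_pos.le (by positivity)
      have : (n:ℝ) ≤ (n':ℝ) := Nat.cast_le.2 hnn'
      linarith
    have hlmne : (1:ℝ) - tq n' ≠ 0 := by linarith
    have hmune : (1:ℝ) - tq n ≠ 0 := by linarith
    have hal0 : 0 < tq n' / (1 - tq n') := div_pos hlm0 (by linarith)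
    have halbe : tq n' / (1 - tq n') ≤ tq n / (1 - tq n) := by
      rw [div_le_div_iff₀ (by linarith) (by linarith)]
      nlinarith
    have hstep : ∀ k, zs k - S (zs k) = (tq k / (1 - tq k)) • (u - zs k) := by
      intro k
      have hk1 : (1:ℝ) - tq k ≠ 0 := by
        have := htq_lt1 k
        intro hcon; rw [sub_eq_zero] at hcon; linarith
      have h1 : u - zs k = (1 - tq k) • (u - S (zs k)) := by
        nth_rewrite 1 [hzseq k]
        module
      have h2 : zs k - S (zs k) = tq k • (u - S (zs k)) := by
        nth_rewrite 1 [hzseq k]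
        module
      rw [h2, h1, smul_smul]
      congr 1
      field_simp
    have hne2 : ⟪S (zs n') - S (zs n), zs n' - zs n⟫_ℝ ≤ ‖zs n' - zs n‖^2 := by
      calc ⟪S (zs n') - S (zs n), zs n' - zs n⟫_ℝ ≤ ‖S (zs n') - S (zs n)‖ * ‖zs n' - zs n‖ :=
            real_inner_le_norm _ _
        _ ≤ ‖zs n' - zs n‖ * ‖zs n' - zs n‖ :=
            mul_le_mul_of_nonneg_right (hSne _ (hzsD n') _ (hzsD n)) (norm_nonneg _)
        _ = ‖zs n' - zs n‖^2 := by ring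
    exact path_mono _ _ hal0 halbe u (zs n') (zs n) (S (zs n')) (S (zs n))
      (hstep n') (hstep n) hne2
  -- the path is Cauchy
  have hpsi_mono : ∀ n n', n ≤ n' → ‖u - zs n‖^2 ≤ ‖u - zs n'‖^2 := by
    intro n n' h
    have h1 := hmono n n' h
    nlinarith [sq_nonneg ‖zs n' - zs n‖]
  have hL : ∃ L, Tendsto (fun n => ‖u - zs n‖^2) atTop (nhds L) := by
    refine ⟨_, tendsto_atTop_ciSup (fun n n' h => hpsi_mono n n' h) ?_⟩
    refine ⟨‖u - q0‖^2, ?_⟩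
    rintro _ ⟨n, rfl⟩
    exact hz_ub n q0 hq0
  obtain ⟨L, hLt⟩ := hL
  have hzs_cauchy : CauchySeq zs := by
    rw [Metric.cauchySeq_iff]
    intro ε hε
    have hc : CauchySeq (fun n => ‖u - zs n‖^2) := hLt.cauchySeq
    obtain ⟨N, hN⟩ := Metric.cauchySeq_iff.1 hc (ε^2) (by positivity)
    refine ⟨N, fun a ha b hb => ?_⟩
    have hkey : ∀ c d', N ≤ c → N ≤ d' → c ≤ d' → dist (zs c) (zs d') < ε := by
      intro c d' hc' hd' hcd
      have h1 := hmono c d' hcd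
      have h2 := hN d' hd' c hc'
      rw [Real.dist_eq] at h2
      have h3 : ‖zs d' - zs c‖^2 < ε^2 := by
        have := le_of_lt (lt_of_abs_lt h2)
        nlinarith [abs_nonneg (‖u - zs d'‖^2 - ‖u - zs c‖^2), le_abs_self (‖u - zs d'‖^2 - ‖u - zs c‖^2)]
      rw [dist_eq_norm, norm_sub_rev]
      nlinarith [norm_nonneg (zs d' - zs c)]
    rcases le_total a b with hab | hab
    · exact hkey a b ha hb hab
    · rw [dist_comm]; exact hkey b a hb ha hab
  obtain ⟨p, hp⟩ := cauchySeq_tendsto_of_complete hzs_cauchy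
  have hpD : p ∈ D := hcl.mem_of_tendsto hp (Filter.Eventually.of_forall hzsD)
  have htq0 : Tendsto tq atTop (nhds 0) := by
    have hd2 : Tendsto (fun n : ℕ => (n:ℝ) + 2) atTop atTop :=
      tendsto_atTop_add_const_right _ 2 tendsto_natCast_atTop_atTop
    simpa [htqdef, one_div, Pi.inv_def] using hd2.inv_tendsto_atTop
  have hzdiff0 : Tendsto (fun n => zs n - S (zs n)) atTop (nhds 0) := by
    apply squeeze_zero_norm hasyz
    have h2 := htq0.mul_const (2 * ‖u - q0‖)
    rw [zero_mul] at h2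
    exact h2
  have hSzs : Tendsto (fun n => S (zs n)) atTop (nhds p) := by
    have h1 := hp.sub hzdiff0
    simpa using h1
  have hSp : S p = p := by
    have h1 : Tendsto (fun n => S (zs n)) atTop (nhds (S p)) := by
      rw [tendsto_iff_norm_sub_tendsto_zero]
      apply squeeze_zero (fun n => norm_nonneg _) (fun n => hSne _ (hzsD n) _ hpD)
      exact tendsto_iff_norm_sub_tendsto_zero.1 hp
    exact tendsto_nhds_unique h1 hSzs
  have hpF : p ∈ F := hfixS p hpD hSp
  have hpq : ∀ q ∈ F, ‖p - q‖^2 ≤ ⟪u - q, p - q⟫_ℝ := by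
    intro q hq
    have h1 : Tendsto (fun n => ‖zs n - q‖^2) atTop (nhds (‖p - q‖^2)) :=
      ((hp.sub tendsto_const_nhds).norm).pow 2
    have h2 : Tendsto (fun n => ⟪u - q, zs n - q⟫_ℝ) atTop (nhds (⟪u - q, p - q⟫_ℝ)) :=
      tendsto_const_nhds.inner (hp.sub tendsto_const_nhds)
    exact le_of_tendsto_of_tendsto' h1 h2 (fun n => hzq n q hq)
  have hpmin : ∀ q ∈ F, ‖u - p‖ ≤ ‖u - q‖ := fun q hq => (proj_var u p q (hpq q hq)).2
  have hpvar : ∀ q ∈ F, ⟪u - p, q - p⟫_ℝ ≤ 0 := fun q hq => (proj_var u p q (hpq q hq)).1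
  -- main iteration
  have hiter' : ∀ k, x (k + 1) = lam k • u + (1 - lam k) • S (x k) := hiter
  clear_value Tl S tq
  have hxD : ∀ k, x k ∈ D := by
    intro k
    induction k with
    | zero => exact hx0
    | succ k ih =>
      rw [hiter' k]
      exact hconv hu (hSD _ ih) (hlam01 k).1 (by linarith [(hlam01 k).2]) (by ring)
  set M := max ‖x 0 - p‖ ‖u - p‖ with hM
  have hSxp : ∀ k, ‖S (x k) - p‖ ≤ ‖x k - p‖ := by
    intro k
    have h := hSne (x k) (hxD k) p hpD
    rwa [hSfix p hpF] at h
  have hxb : ∀ k, ‖x k - p‖ ≤ M := by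
    intro k
    induction k with
    | zero => exact le_max_left _ _
    | succ k ih =>
      have hsplit : x (k+1) - p = (1 - lam k) • (S (x k) - p) + lam k • (u - p) := by
        rw [hiter' k]; module
      have h0 : 0 ≤ lam k := (hlam01 k).1
      have h1 : lam k ≤ 1 := (hlam01 k).2
      calc ‖x (k+1) - p‖ ≤ ‖(1 - lam k) • (S (x k) - p)‖ + ‖lam k • (u - p)‖ := by
            rw [hsplit]; exact norm_add_le _ _
        _ = (1 - lam k) * ‖S (x k) - p‖ + lam k * ‖u - p‖ := by
            rw [norm_smul, norm_smul, Real.norm_eq_abs, Real.norm_eq_abs,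
              abs_of_nonneg (by linarith : (0:ℝ) ≤ 1 - lam k), abs_of_nonneg h0]
        _ ≤ M := by
            have h2 := hSxp k
            have h3 : ‖u - p‖ ≤ M := le_max_right _ _
            nlinarith
  have hM0 : 0 ≤ M := le_trans (norm_nonneg _) (le_max_left _ _)
  clear_value M
  set C := ‖u - p‖ + M with hCdef
  have hC0 : 0 ≤ C := add_nonneg (norm_nonneg _) hM0
  clear_value C
  have huS : ∀ k, ‖u - S (x k)‖ ≤ C := by
    intro k
    calc ‖u - S (x k)‖ = ‖(u - p) + (p - S (x k))‖ := by
          rw [show u - S (x k) = (u - p) + (p - S (x k)) by abel]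
      _ ≤ ‖u - p‖ + ‖p - S (x k)‖ := norm_add_le _ _
      _ = ‖u - p‖ + ‖S (x k) - p‖ := by rw [norm_sub_rev p (S (x k))]
      _ ≤ C := by
          have h1 := hSxp k
          have h2 := hxb k
          rw [hCdef]; linarith
  -- step (b): successive differences tend to zero
  have hrec1 : ∀ k, ‖x (k+1+1) - x (k+1)‖ ≤
      (1 - lam (k+1)) * ‖x (k+1) - x k‖ + lam (k+1) * 0 + |lam (k+1) - lam k| * C := by
    intro k
    have hsplit : x (k+1+1) - x (k+1)
        = (lam (k+1) - lam k) • (u - S (x k)) + (1 - lam (k+1)) • (S (x (k+1)) - S (x k)) := by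
      rw [hiter' (k+1), hiter' k]; module
    have h0 : 0 ≤ 1 - lam (k+1) := by linarith [(hlam01 (k+1)).2]
    calc ‖x (k+1+1) - x (k+1)‖
        ≤ ‖(lam (k+1) - lam k) • (u - S (x k))‖ + ‖(1 - lam (k+1)) • (S (x (k+1)) - S (x k))‖ := by
          rw [hsplit]; exact norm_add_le _ _
      _ = |lam (k+1) - lam k| * ‖u - S (x k)‖ + (1 - lam (k+1)) * ‖S (x (k+1)) - S (x k)‖ := by
          rw [norm_smul, norm_smul, Real.norm_eq_abs, Real.norm_eq_abs, abs_of_nonneg h0]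
      _ ≤ (1 - lam (k+1)) * ‖x (k+1) - x k‖ + lam (k+1) * 0 + |lam (k+1) - lam k| * C := by
          have h1 := hSne (x (k+1)) (hxD (k+1)) (x k) (hxD k)
          have h3 := mul_le_mul_of_nonneg_left h1 h0
          have h4 := mul_le_mul_of_nonneg_left (huS k) (abs_nonneg (lam (k+1) - lam k))
          linarith
  have hdx : Tendsto (fun k => ‖x (k+1) - x k‖) atTop (nhds 0) := by
    apply xu_lemma (a := fun k => ‖x (k+1) - x k‖) (b := fun k => |lam (k+1) - lam k| * C)
      (c := fun _ => (0:ℝ)) (lam := fun k => lam (k+1))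
      (fun k => norm_nonneg _) (fun k => ⟨(hlam01 (k+1)).1, (hlam01 (k+1)).2⟩)
      ?_ (fun k => mul_nonneg (abs_nonneg _) hC0) (hlamvar.mul_right C)
      (fun ε hε => ⟨0, fun k _ => le_of_lt hε⟩) hrec1
    intro hs
    exact hlamdiv ((summable_nat_add_iff 1).1 hs)
  -- step (c): asymptotic regularity
  have heas : ∀ k, ‖x k - S (x k)‖ ≤ ‖x (k+1) - x k‖ + lam k * C := by
    intro k
    have hsplit : x k - S (x k) = (x k - x (k+1)) + lam k • (u - S (x k)) := by
      rw [hiter' k]; module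
    calc ‖x k - S (x k)‖ ≤ ‖x k - x (k+1)‖ + ‖lam k • (u - S (x k))‖ := by
          rw [hsplit]; exact norm_add_le _ _
      _ ≤ ‖x (k+1) - x k‖ + lam k * C := by
          rw [norm_sub_rev (x k) (x (k+1)), norm_smul, Real.norm_eq_abs,
            abs_of_nonneg (hlam01 k).1]
          have h1 := mul_le_mul_of_nonneg_left (huS k) (hlam01 k).1
          linarith
  have hasy : Tendsto (fun k => ‖x k - S (x k)‖) atTop (nhds 0) := by
    apply squeeze_zero (fun k => norm_nonneg _) heas
    have h1 := hlam0.mul_const C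
    rw [zero_mul] at h1
    simpa using hdx.add h1
  -- step (d): the limsup estimate
  set C2 := M + 2*‖u - p‖ with hC2def
  have hC20 : 0 ≤ C2 := by
    rw [hC2def]
    have := norm_nonneg (u - p)
    linarith
  clear_value C2
  have hweak : ∀ ε : ℝ, 0 < ε → ∃ N, ∀ k, N ≤ k → 2*⟪u - p, x (k+1) - p⟫_ℝ ≤ ε := by
    intro ε hε
    have hcomb : Tendsto (fun n => tq n * C^2 + 2*C2*‖zs n - p‖) atTop (nhds 0) := by
      have h1 := htq0.mul_const (C^2)
      rw [zero_mul] at h1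
      have h2 : Tendsto (fun n => ‖zs n - p‖) atTop (nhds 0) :=
        tendsto_iff_norm_sub_tendsto_zero.1 hp
      have h3 := h2.const_mul (2*C2)
      rw [mul_zero] at h3
      have h5 := h1.add h3
      rw [add_zero] at h5
      exact h5
    obtain ⟨n, hn⟩ : ∃ n, tq n * C^2 + 2*C2*‖zs n - p‖ < ε/2 := by
      obtain ⟨N, hN⟩ := (Metric.tendsto_atTop.1 hcomb) (ε/2) (by linarith)
      refine ⟨N, ?_⟩
      have h4 := hN N le_rfl
      rw [Real.dist_eq, sub_zero] at h4
      exact lt_of_abs_lt h4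
    have ht0 : 0 < tq n := htq_pos n
    have ht1 : tq n < 1 := htq_lt1 n
    have h2C : (0:ℝ) < 2*C + 1 := by linarith
    obtain ⟨N1, hN1⟩ := (Metric.tendsto_atTop.1 hasy) (min 1 (ε/4 * tq n / (2*C + 1)))
      (lt_min one_pos (div_pos (mul_pos (by linarith : (0:ℝ) < ε/4) ht0) h2C))
    have hest : ∀ j, N1 ≤ j → 2*⟪u - p, x j - p⟫_ℝ ≤ ε := by
      intro j hj
      have hej : ‖x j - S (x j)‖ < min 1 (ε/4 * tq n / (2*C + 1)) := by
        have h5 := hN1 j hj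
        rwa [Real.dist_eq, sub_zero, abs_of_nonneg (norm_nonneg _)] at h5
      have he1 : ‖x j - S (x j)‖ ≤ 1 := le_of_lt (lt_of_lt_of_le hej (min_le_left _ _))
      have he2 : ‖x j - S (x j)‖ ≤ ε/4 * tq n / (2*C + 1) :=
        le_of_lt (lt_of_lt_of_le hej (min_le_right _ _))
      have he0 : 0 ≤ ‖x j - S (x j)‖ := norm_nonneg _
      have hdC : ‖zs n - x j‖ ≤ C := by
        calc ‖zs n - x j‖ = ‖(zs n - p) + (p - x j)‖ := by
              rw [show zs n - x j = (zs n - p) + (p - x j) by abel]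
          _ ≤ ‖zs n - p‖ + ‖p - x j‖ := norm_add_le _ _
          _ ≤ C := by
              have h6 := hz_le n p hpF
              have h7 := hxb j
              rw [norm_sub_rev p (x j)]
              rw [hCdef]; linarith
      have h1 : zs n - x j = (1 - tq n) • (S (zs n) - x j) + tq n • (u - x j) := by
        nth_rewrite 1 [hzseq n]; module
      have h2 := normsq_add_le ((1 - tq n) • (S (zs n) - x j)) (tq n • (u - x j))
      rw [← h1] at h2
      have h3 : ‖(1 - tq n) • (S (zs n) - x j)‖ = (1 - tq n) * ‖S (zs n) - x j‖ := by
        rw [norm_smul, Real.norm_eq_abs, abs_of_nonneg (by linarith : (0:ℝ) ≤ 1 - tq n)]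
      have h4 : ⟪tq n • (u - x j), zs n - x j⟫_ℝ
          = tq n * (⟪u - zs n, zs n - x j⟫_ℝ + ‖zs n - x j‖^2) := by
        rw [real_inner_smul_left]
        congr 1
        rw [show u - x j = (u - zs n) + (zs n - x j) by abel, inner_add_left,
          real_inner_self_eq_norm_sq]
      rw [h3, h4, mul_pow] at h2
      have hsze : ‖S (zs n) - x j‖ ≤ ‖zs n - x j‖ + ‖x j - S (x j)‖ := by
        calc ‖S (zs n) - x j‖ = ‖(S (zs n) - S (x j)) + (S (x j) - x j)‖ := by
              rw [show S (zs n) - x j = (S (zs n) - S (x j)) + (S (x j) - x j) by abel]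
          _ ≤ ‖S (zs n) - S (x j)‖ + ‖S (x j) - x j‖ := norm_add_le _ _
          _ ≤ ‖zs n - x j‖ + ‖x j - S (x j)‖ := by
              have h8 := hSne (zs n) (hzsD n) (x j) (hxD j)
              rw [norm_sub_rev (S (x j)) (x j)]
              linarith
      have hmaster := master_real ht0.le ht1.le (norm_nonneg (zs n - x j)) he0
        (norm_nonneg (S (zs n) - x j)) hsze h2
      have hipflip : ⟪u - zs n, x j - zs n⟫_ℝ = -⟪u - zs n, zs n - x j⟫_ℝ := by
        rw [show x j - zs n = -(zs n - x j) by abel, inner_neg_right]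
      have hA : 2*(tq n)*⟪u - zs n, x j - zs n⟫_ℝ
          ≤ (tq n)^2*C^2 + ‖x j - S (x j)‖*(2*C+1) := by
        rw [hipflip]
        have h9 : (tq n)^2*‖zs n - x j‖^2 ≤ (tq n)^2*C^2 := by
          have h9a := mul_self_le_mul_self (norm_nonneg (zs n - x j)) hdC
          nlinarith [sq_nonneg (tq n)]
        have hde : ‖zs n - x j‖ * ‖x j - S (x j)‖ ≤ C * ‖x j - S (x j)‖ :=
          mul_le_mul_of_nonneg_right hdC he0
        have hee : ‖x j - S (x j)‖ * ‖x j - S (x j)‖ ≤ ‖x j - S (x j)‖ := by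
          have h9b := mul_le_mul_of_nonneg_left he1 he0
          rwa [mul_one] at h9b
        linarith [hmaster, h9, hde, hee]
      have hB : ‖x j - S (x j)‖*(2*C+1) ≤ ε/4 * tq n := by
        have h10 := mul_le_mul_of_nonneg_right he2 h2C.le
        rwa [div_mul_cancel₀ _ (ne_of_gt h2C)] at h10
      have hdiv : 2*⟪u - zs n, x j - zs n⟫_ℝ ≤ tq n * C^2 + ε/4 := by
        have hC3 : tq n * (2*⟪u - zs n, x j - zs n⟫_ℝ) ≤ tq n * (tq n * C^2 + ε/4) := by
          have hr1 : tq n * (2*⟪u - zs n, x j - zs n⟫_ℝ) = 2*(tq n)*⟪u - zs n, x j - zs n⟫_ℝ := by ring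
          have hr2 : tq n * (tq n * C^2 + ε/4) = (tq n)^2*C^2 + ε/4 * tq n := by ring
          rw [hr1, hr2]
          linarith [hA, hB]
        exact le_of_mul_le_mul_left hC3 ht0
      have hdecomp : ⟪u - p, x j - p⟫_ℝ - ⟪u - zs n, x j - zs n⟫_ℝ ≤ C2 * ‖zs n - p‖ := by
        have h5 : ⟪u - p, x j - p⟫_ℝ
            = ⟪u - zs n, x j - zs n⟫_ℝ + ⟪u - zs n, zs n - p⟫_ℝ + ⟪zs n - p, x j - p⟫_ℝ := by
          rw [show u - p = (u - zs n) + (zs n - p) by abel, inner_add_left]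
          have h11 : ⟪u - zs n, x j - p⟫_ℝ = ⟪u - zs n, x j - zs n⟫_ℝ + ⟪u - zs n, zs n - p⟫_ℝ := by
            rw [← inner_add_right]
            congr 1
            abel
          rw [h11]
        have h6 : ⟪u - zs n, zs n - p⟫_ℝ ≤ ‖u - zs n‖ * ‖zs n - p‖ := real_inner_le_norm _ _
        have h7 : ⟪zs n - p, x j - p⟫_ℝ ≤ ‖zs n - p‖ * ‖x j - p‖ := real_inner_le_norm _ _
        have h8 : ‖u - zs n‖ ≤ 2*‖u - p‖ := by
          calc ‖u - zs n‖ = ‖(u - p) + (p - zs n)‖ := by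
                rw [show u - zs n = (u - p) + (p - zs n) by abel]
            _ ≤ ‖u - p‖ + ‖p - zs n‖ := norm_add_le _ _
            _ ≤ 2*‖u - p‖ := by
                have := hz_le n p hpF
                rw [norm_sub_rev p (zs n)]
                linarith
        have h9 := hxb j
        have h12 := mul_le_mul_of_nonneg_right h8 (norm_nonneg (zs n - p))
        have h13 := mul_le_mul_of_nonneg_left h9 (norm_nonneg (zs n - p))
        rw [h5, hC2def]
        linarith [h6, h7, h12, h13]
      linarith [hdiv, hdecomp, hn]
    exact ⟨N1, fun k hk => hest (k+1) (le_trans hk (Nat.le_succ k))⟩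
  -- step (e): conclusion
  have hrec2 : ∀ k, ‖x (k+1) - p‖^2
      ≤ (1 - lam k) * ‖x k - p‖^2 + lam k * (2*⟪u - p, x (k+1) - p⟫_ℝ) + 0 := by
    intro k
    have h0 : 0 ≤ lam k := (hlam01 k).1
    have h1 : lam k ≤ 1 := (hlam01 k).2
    have hsplit : x (k+1) - p = (1 - lam k) • (S (x k) - p) + lam k • (u - p) := by
      rw [hiter' k]; module
    have h2 := normsq_add_le ((1 - lam k) • (S (x k) - p)) (lam k • (u - p))
    rw [← hsplit, real_inner_smul_left] at h2
    have h3 : ‖(1 - lam k) • (S (x k) - p)‖ = (1 - lam k) * ‖S (x k) - p‖ := by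
      rw [norm_smul, Real.norm_eq_abs, abs_of_nonneg (by linarith : (0:ℝ) ≤ 1 - lam k)]
    rw [h3, mul_pow] at h2
    have h4 : (1 - lam k)^2 * ‖S (x k) - p‖^2 ≤ (1 - lam k) * ‖x k - p‖^2 := by
      have h5 := hSxp k
      have e1 : ‖S (x k) - p‖^2 ≤ ‖x k - p‖^2 := by
        have := mul_self_le_mul_self (norm_nonneg (S (x k) - p)) h5
        nlinarith
      have e2 : (1 - lam k)^2 ≤ 1 - lam k := by nlinarith
      calc (1 - lam k)^2 * ‖S (x k) - p‖^2 ≤ (1 - lam k)^2 * ‖x k - p‖^2 :=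
            mul_le_mul_of_nonneg_left e1 (sq_nonneg _)
        _ ≤ (1 - lam k) * ‖x k - p‖^2 := mul_le_mul_of_nonneg_right e2 (sq_nonneg _)
    linarith
  have hfin : Tendsto (fun k => ‖x k - p‖^2) atTop (nhds 0) := by
    exact xu_lemma (a := fun k => ‖x k - p‖^2) (b := fun _ => (0:ℝ))
      (c := fun k => 2*⟪u - p, x (k+1) - p⟫_ℝ) (lam := lam)
      (fun k => sq_nonneg _) (fun k => ⟨(hlam01 k).1, (hlam01 k).2⟩) hlamdiv
      (fun k => le_rfl) summable_zero hweak hrec2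
  refine ⟨p, hpF, hpmin, ?_⟩
  rw [tendsto_iff_norm_sub_tendsto_zero]
  have h1 := hfin.sqrt
  rw [Real.sqrt_zero] at h1
  have h2 : (fun k => ‖x k - p‖) = fun k => Real.sqrt (‖x k - p‖^2) := by
    funext k
    rw [Real.sqrt_sq (norm_nonneg _)]
  rw [h2]
  exact h1
end

section
/- Let D be a nonempty subset of a real Hilbert space H and let (T_i)_{i∈I} be a countable family of quasi-nonexpansive self-maps of D with ⋂_{i∈I} Fix(T_i) ≠ ∅, and let (w_i)_{i∈I} be strictly positive reals with ∑_{i∈I} w_i = 1. Then Fix(∑_{i∈I} w_i T_i) = ⋂_{i∈I} Fix(T_i). -/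
open scoped RealInnerProductSpace


theorem stmt_10 {H : Type*} [NormedAddCommGroup H] [InnerProductSpace ℝ H] [CompleteSpace H]
    (D : Set H) (hne : D.Nonempty)
    (T : ℕ → H → H) (hmaps : ∀ i, Set.MapsTo (T i) D D)
    (hQNE : ∀ i, ∀ x ∈ D, ∀ y ∈ D, T i y = y → ‖T i x - y‖ ≤ ‖x - y‖)
    (hF : {x | x ∈ D ∧ ∀ i, T i x = x}.Nonempty)
    (w : ℕ → ℝ) (hw : ∀ i, 0 < w i) (hw1 : HasSum w 1) :
    {x | x ∈ D ∧ (∑' i, w i • T i x) = x} = {x | x ∈ D ∧ ∀ i, T i x = x} := by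
  obtain ⟨y, hyD, hyF⟩ := hF
  ext x
  simp only [Set.mem_setOf_eq]
  constructor
  · rintro ⟨hxD, hx⟩
    refine ⟨hxD, ?_⟩
    -- summability of the series
    have hsub : Summable (fun i => w i • (T i x - y)) := by
      apply Summable.of_norm
      apply Summable.of_nonneg_of_le (fun i => norm_nonneg _)
        (f := fun i => w i * ‖x - y‖)
      · intro i
        rw [norm_smul, Real.norm_eq_abs, abs_of_pos (hw i)]
        exact mul_le_mul_of_nonneg_left (hQNE i x hxD y hyD (hyF i)) (hw i).le
      · exact hw1.summable.mul_right _
    have hsy : HasSum (fun i => w i • y) y := by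
      simpa using hw1.smul_const y
    have hsumf : Summable (fun i => w i • T i x) := by
      have : (fun i => w i • T i x) = fun i => (w i • (T i x - y)) + w i • y := by
        funext i; rw [smul_sub]; abel
      rw [this]
      exact (hsub.hasSum.add hsy).summable
    have hsx : HasSum (fun i => w i • T i x) x := by
      have h := hsumf.hasSum; rw [hx] at h; exact h
    have hsv : HasSum (fun i => w i • (T i x - y)) (x - y) := by
      have := hsx.sub hsy
      simpa [smul_sub] using this
    set v := x - y with hv
    -- apply inner product with v
    have hinner : HasSum (fun i => w i * (inner ℝ (T i x - y) v : ℝ)) (‖v‖ ^ 2) := by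
      have := hsv.mapL (innerSL ℝ v)
      simp only [innerSL_apply_apply, inner_smul_right] at this
      have h2 : (inner ℝ v v : ℝ) = ‖v‖ ^ 2 := real_inner_self_eq_norm_sq v
      rw [h2] at this
      simp only [← real_inner_comm v] at this
      exact this
    have hbound : HasSum (fun i => w i * ‖v‖ ^ 2) (‖v‖ ^ 2) := by
      simpa using hw1.mul_right (‖v‖ ^ 2)
    have hterm_le : ∀ i, w i * (inner ℝ (T i x - y) v : ℝ) ≤ w i * ‖v‖ ^ 2 := by
      intro i
      apply mul_le_mul_of_nonneg_left _ (hw i).le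
      calc (inner ℝ (T i x - y) v : ℝ) ≤ ‖T i x - y‖ * ‖v‖ := real_inner_le_norm _ _
        _ ≤ ‖v‖ * ‖v‖ :=
          mul_le_mul_of_nonneg_right (hQNE i x hxD y hyD (hyF i)) (norm_nonneg _)
        _ = ‖v‖ ^ 2 := (sq ‖v‖).symm
    have hdiff : HasSum (fun i => w i * ‖v‖ ^ 2 - w i * (inner ℝ (T i x - y) v : ℝ)) 0 := by
      simpa using hbound.sub hinner
    have heach : ∀ i, w i * ‖v‖ ^ 2 - w i * (inner ℝ (T i x - y) v : ℝ) = 0 := by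
      have := (hasSum_zero_iff_of_nonneg
        (fun i => sub_nonneg.mpr (hterm_le i))).mp hdiff
      intro i; exact congrFun this i
    intro i
    have hinn : (inner ℝ (T i x - y) v : ℝ) = ‖v‖ ^ 2 := by
      have := heach i
      have hwne := (hw i).ne'
      nlinarith [hw i]
    have hzero : ‖T i x - y - v‖ ^ 2 ≤ 0 := by
      rw [norm_sub_sq_real, hinn]
      have h1 : ‖T i x - y‖ ≤ ‖v‖ := hQNE i x hxD y hyD (hyF i)
      nlinarith [norm_nonneg (T i x - y), norm_nonneg v]
    have : T i x - y - v = 0 := by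
      have := sq_nonneg ‖T i x - y - v‖
      have h0 : ‖T i x - y - v‖ ^ 2 = 0 := le_antisymm hzero this
      have := pow_eq_zero_iff (n := 2) (by norm_num) |>.mp h0
      exact norm_eq_zero.mp this
    rw [hv] at this
    have hx0 : T i x - x = 0 := by rw [← this]; abel
    exact sub_eq_zero.mp hx0
  · rintro ⟨hxD, hfix⟩
    refine ⟨hxD, ?_⟩
    have : ∀ i, w i • T i x = w i • x := fun i => by rw [hfix i]
    rw [funext this]
    have := hw1.smul_const x
    rw [this.tsum_eq, one_smul]
end

section
/- Let D be a nonempty subset of a real Hilbert space, let T : D → D be quasi-nonexpansive with Fix(T) ≠ ∅, and suppose for some subset C with ∅ ≠ C ⊆ Fix(T) that ‖T(x) − y‖ < ‖x − y‖ for all x ∈ D \ Fix(T) and all y ∈ C (i.e., T is C-strictly quasi-nonexpansive). If a finite family T₁, …, T_m of such operators is each C-sQNE with common C ⊆ ⋂ Fix(T_i) nonempty, then any convex combination ∑ w_i T_i with strictly positive weights summing to 1 is C-strictly quasi-nonexpansive. -/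
theorem stmt_16 {H : Type*} [NormedAddCommGroup H] [InnerProductSpace ℝ H] [CompleteSpace H]
    (D : Set H) (hne : D.Nonempty) (m : ℕ) (hm : 0 < m)
    (T : Fin m → H → H) (hmaps : ∀ i, Set.MapsTo (T i) D D)
    (hQNE : ∀ i, ∀ x ∈ D, ∀ y ∈ D, T i y = y → ‖T i x - y‖ ≤ ‖x - y‖)
    (C : Set H) (hCne : C.Nonempty)
    (hCsub : C ⊆ {x | x ∈ D ∧ ∀ i, T i x = x})
    (hCs : ∀ i, ∀ x ∈ D, T i x ≠ x → ∀ y ∈ C, ‖T i x - y‖ < ‖x - y‖)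
    (w : Fin m → ℝ) (hw : ∀ i, 0 < w i) (hw1 : ∑ i, w i = 1)
    (S : H → H) (hS : S = fun x => ∑ i, w i • T i x) :
    (∀ x ∈ D, ∀ y ∈ D, S y = y → ‖S x - y‖ ≤ ‖x - y‖) ∧
    (∀ x ∈ D, S x ≠ x → ∀ y ∈ C, ‖S x - y‖ < ‖x - y‖) := by
  subst hS
  obtain ⟨c, hc⟩ := hCne
  obtain ⟨hcD, hcFix⟩ := hCsub hc
  -- rewrite S x - z as a convex combination of T i x - z
  have key : ∀ (z x : H), (∑ i, w i • T i x) - z = ∑ i, w i • (T i x - z) := by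
    intro z x
    simp only [smul_sub, Finset.sum_sub_distrib, ← Finset.sum_smul, hw1, one_smul]
  have nb : ∀ (z x : H), ‖(∑ i, w i • T i x) - z‖ ≤ ∑ i, w i * ‖T i x - z‖ := by
    intro z x
    rw [key]
    refine (norm_sum_le _ _).trans_eq ?_
    refine Finset.sum_congr rfl fun i _ => ?_
    rw [norm_smul, Real.norm_eq_abs, abs_of_pos (hw i)]
  -- any fixed point of S in D is a common fixed point of all T i
  have fix : ∀ y ∈ D, (∑ i, w i • T i y) = y → ∀ i, T i y = y := by
    intro y hy hSy i
    by_contra hne'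
    have h1 : ∑ j, w j * ‖T j y - c‖ < ∑ j, w j * ‖y - c‖ := by
      refine Finset.sum_lt_sum (fun j _ => ?_) ⟨i, Finset.mem_univ i, ?_⟩
      · exact mul_le_mul_of_nonneg_left (hQNE j y hy c hcD (hcFix j)) (hw j).le
      · exact mul_lt_mul_of_pos_left (hCs i y hy hne' c hc) (hw i)
    have h2 : ‖y - c‖ ≤ ∑ j, w j * ‖T j y - c‖ := by
      have := nb c y
      rwa [hSy] at this
    have h3 : ∑ j, w j * ‖y - c‖ = ‖y - c‖ := by
      rw [← Finset.sum_mul, hw1, one_mul]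
    linarith
  constructor
  · intro x hx y hy hSy
    have hfix := fix y hy hSy
    calc ‖(∑ i, w i • T i x) - y‖ ≤ ∑ i, w i * ‖T i x - y‖ := nb y x
      _ ≤ ∑ i, w i * ‖x - y‖ := by
          refine Finset.sum_le_sum fun i _ => ?_
          exact mul_le_mul_of_nonneg_left (hQNE i x hx y hy (hfix i)) (hw i).le
      _ = ‖x - y‖ := by rw [← Finset.sum_mul, hw1, one_mul]
  · intro x hx hSx y hy
    obtain ⟨hyD, hyFix⟩ := hCsub hy
    have : ∃ i, T i x ≠ x := by
      by_contra h
      push_neg at h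
      apply hSx
      simp only [h, ← Finset.sum_smul, hw1, one_smul]
    obtain ⟨i, hi⟩ := this
    calc ‖(∑ j, w j • T j x) - y‖ ≤ ∑ j, w j * ‖T j x - y‖ := nb y x
      _ < ∑ j, w j * ‖x - y‖ := by
          refine Finset.sum_lt_sum (fun j _ => ?_) ⟨i, Finset.mem_univ i, ?_⟩
          · exact mul_le_mul_of_nonneg_left (hQNE j x hx y hyD (hyFix j)) (hw j).le
          · exact mul_lt_mul_of_pos_left (hCs i x hx hi y hy) (hw i)
      _ = ‖x - y‖ := by rw [← Finset.sum_mul, hw1, one_mul]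
end

section
/- Let D be a nonempty closed convex subset of a real Hilbert space H and let (T_i)_{i∈I} be a countable family of firmly nonexpansive self-maps of D with F := ⋂_{i∈I} Fix(T_i) ≠ ∅. Let (w_i)_{i∈I} be strictly positive reals summing to 1, (λ_k) a steering sequence, and u, x⁰ ∈ D. Then the sequence x^{k+1} = λ_k u + (1 − λ_k) ∑_{i∈I} w_i T_i(x^k) converges strongly to P_F(u). -/
open Filter Finset
open scoped InnerProductSpace

lemma halpern_numeric (a lam c b : ℕ → ℝ) (ha0 : ∀ k, 0 ≤ a k)
    (hl0 : ∀ k, 0 ≤ lam k) (hl1 : ∀ k, lam k ≤ 1)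
    (hdiv : Tendsto (fun n => ∑ k ∈ Finset.range n, lam k) atTop atTop)
    (hb0 : ∀ k, 0 ≤ b k) (hb : Summable b)
    (hc : ∀ ε > 0, ∀ᶠ k in atTop, c k ≤ ε)
    (hrec : ∀ k, a (k+1) ≤ (1 - lam k) * a k + lam k * c k + b k) :
    Tendsto a atTop (nhds 0) := by
  have key : ∀ ε > 0, ∀ᶠ k in atTop, a k < ε := by
    intro ε hε
    have hε4 : 0 < ε/4 := by linarith
    obtain ⟨N₁, hN₁⟩ := (hc (ε/4) hε4).exists_forall_of_atTop
    -- tail of b small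
    have hcau : CauchySeq (fun n => ∑ k ∈ Finset.range n, b k) :=
      hb.hasSum.tendsto_sum_nat.cauchySeq
    obtain ⟨N₂, hN₂⟩ := Metric.cauchySeq_iff'.1 hcau (ε/8) (by linarith)
    set N := max N₁ N₂ with hN
    have hBsmall : ∀ m, ∑ k ∈ Finset.Ico N m, b k ≤ ε/4 := by
      intro m
      rcases le_or_gt m N with h | h
      · rw [Finset.Ico_eq_empty (by omega)]
        simp [le_of_lt hε4]
      · have h1 := hN₂ m (le_trans (le_max_right _ _) h.le)
        have h2 := hN₂ N (le_max_right _ _)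
        rw [Real.dist_eq] at h1 h2
        have : ∑ k ∈ Finset.Ico N m, b k
            = (∑ k ∈ Finset.range m, b k) - ∑ k ∈ Finset.range N, b k := by
          rw [Finset.sum_Ico_eq_sub _ h.le]
        rw [this]
        have := abs_lt.1 h1
        have := abs_lt.1 h2
        linarith [abs_lt.1 h1, abs_lt.1 h2]
    -- the exponential bound
    set E : ℕ → ℝ := fun m => a N * Real.exp (-(∑ k ∈ Finset.Ico N m, lam k)) with hE
    have hEpos : ∀ m, 0 ≤ E m := fun m =>
      mul_nonneg (ha0 N) (Real.exp_nonneg _)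
    have hbound : ∀ m, N ≤ m → a m ≤ E m + ε/4 + ∑ k ∈ Finset.Ico N m, b k := by
      intro m hm
      induction m with
      | zero =>
        have : N = 0 := by omega
        simp [this, hE, le_of_lt hε4]
      | succ m ih =>
        rcases Nat.lt_or_ge m N with h | h
        · -- m + 1 = N
          have hmN : N = m + 1 := by omega
          simp [← hmN, hE, le_of_lt hε4]
        · have ihm := ih h
          have hrecm := hrec m
          have hcm : c m ≤ ε/4 := hN₁ m (le_trans (le_max_left _ _) h)
          have hEstep : E (m+1) = E m * Real.exp (-(lam m)) := by
            rw [hE]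
            simp only
            rw [Finset.sum_Ico_succ_top h, neg_add, Real.exp_add, ← mul_assoc]
          have hexp : 1 - lam m ≤ Real.exp (-(lam m)) := by
            have := Real.add_one_le_exp (-(lam m))
            linarith
          have hBstep : ∑ k ∈ Finset.Ico N (m+1), b k
              = (∑ k ∈ Finset.Ico N m, b k) + b m := Finset.sum_Ico_succ_top h _
          have h1m : 0 ≤ 1 - lam m := by linarith [hl1 m]
          calc a (m+1) ≤ (1 - lam m) * a m + lam m * c m + b m := hrecm
            _ ≤ (1 - lam m) * (E m + ε/4 + ∑ k ∈ Finset.Ico N m, b k)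
                + lam m * (ε/4) + b m := by
                have := mul_le_mul_of_nonneg_left ihm h1m
                have := mul_le_mul_of_nonneg_left hcm (hl0 m)
                linarith
            _ ≤ E (m+1) + ε/4 + ∑ k ∈ Finset.Ico N (m+1), b k := by
                rw [hBstep, hEstep]
                have hE1 : (1 - lam m) * E m ≤ Real.exp (-(lam m)) * E m :=
                  mul_le_mul_of_nonneg_right hexp (hEpos m)
                have hB0 : 0 ≤ ∑ k ∈ Finset.Ico N m, b k :=
                  Finset.sum_nonneg fun k _ => hb0 k
                have hl0m := hl0 m
                have hl1m := hl1 m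
                nlinarith
    -- E m → 0
    have hEtend : Tendsto E atTop (nhds 0) := by
      have hsum : Tendsto (fun m => ∑ k ∈ Finset.Ico N m, lam k) atTop atTop := by
        have : ∀ᶠ m in atTop, ∑ k ∈ Finset.Ico N m, lam k
            = (∑ k ∈ Finset.range m, lam k) - ∑ k ∈ Finset.range N, lam k := by
          filter_upwards [eventually_ge_atTop N] with m hm
          rw [Finset.sum_Ico_eq_sub _ hm]
        exact Tendsto.congr' (EventuallyEq.symm this) (hdiv.atTop_add tendsto_const_nhds)
      have : Tendsto (fun m => Real.exp (-(∑ k ∈ Finset.Ico N m, lam k))) atTop (nhds 0) :=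
        Real.tendsto_exp_atBot.comp (tendsto_neg_atTop_atBot.comp hsum)
      simpa [hE] using this.const_mul (a N)
    have hEev : ∀ᶠ m in atTop, E m < ε/4 := hEtend.eventually (gt_mem_nhds hε4)
    filter_upwards [hEev, eventually_ge_atTop N] with m hEm hm
    have := hbound m hm
    have := hBsmall m
    linarith
  -- conclude
  rw [Metric.tendsto_atTop]
  intro ε hε
  obtain ⟨N, hN⟩ := (key ε hε).exists_forall_of_atTop
  exact ⟨N, fun n hn => by rw [Real.dist_eq, sub_zero, abs_of_nonneg (ha0 n)]; exact hN n hn⟩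


lemma weak_cluster {H : Type*} [NormedAddCommGroup H] [InnerProductSpace ℝ H] [CompleteSpace H]
    (y : ℕ → H) (M : ℝ) (hM : ∀ k, ‖y k‖ ≤ M) :
    ∃ φ : ℕ → ℕ, StrictMono φ ∧ ∃ z : H,
      ∀ v : H, Filter.Tendsto (fun k => ⟪v, y (φ k)⟫_ℝ) Filter.atTop (nhds ⟪v, z⟫_ℝ) := by
  classical
  set M' : ℝ := max M 0 with hM'def
  have hM'0 : 0 ≤ M' := le_max_right _ _
  have hMy : ∀ k, ‖y k‖ ≤ M' := fun k => le_trans (hM k) (le_max_left _ _)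
  set V : Submodule ℝ H := (Submodule.span ℝ (Set.range y)).topologicalClosure with hVdef
  have hVclosed : IsClosed (V : Set H) := Submodule.isClosed_topologicalClosure _
  haveI : CompleteSpace V := hVclosed.completeSpace_coe
  have hyV : ∀ k, y k ∈ V :=
    fun k => Submodule.le_topologicalClosure _ (Submodule.subset_span ⟨k, rfl⟩)
  -- separability: dense sequence in V
  have h1 : TopologicalSpace.IsSeparable (Submodule.span ℝ (Set.range y) : Set H) :=
    TopologicalSpace.IsSeparable.span (Set.countable_range y).isSeparable
  have hsep : TopologicalSpace.IsSeparable (V : Set H) := by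
    rw [hVdef]
    rw [Submodule.topologicalClosure_coe]
    exact h1.closure
  obtain ⟨c, hc_count, hc_sub⟩ := hsep
  have hc_ne : c.Nonempty := by
    rcases c.eq_empty_or_nonempty with h | h
    · exfalso
      have : (0 : H) ∈ closure c := hc_sub V.zero_mem
      rw [h] at this
      simp at this
    · exact h
  obtain ⟨d, hd_range⟩ := Set.Countable.exists_eq_range hc_count hc_ne
  have hdense : ∀ v ∈ V, ∀ ε > 0, ∃ n, ‖v - d n‖ < ε := by
    intro v hv ε hε
    have := hc_sub hv
    rw [hd_range] at this
    obtain ⟨b, hb, hdist⟩ := Metric.mem_closure_iff.1 this ε hε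
    obtain ⟨n, rfl⟩ := hb
    exact ⟨n, by rwa [← dist_eq_norm]⟩
  -- diagonal extraction via compactness of product of intervals
  set K : Set (ℕ → ℝ) := Set.pi Set.univ (fun n => Set.Icc (-(‖d n‖ * M')) (‖d n‖ * M')) with hK
  have hKcomp : IsCompact K := isCompact_univ_pi (fun n => isCompact_Icc)
  have hmem : ∀ k, (fun n => ⟪d n, y k⟫_ℝ) ∈ K := by
    intro k n _
    have h1 : |⟪d n, y k⟫_ℝ| ≤ ‖d n‖ * ‖y k‖ := abs_real_inner_le_norm _ _
    have h2 : ‖d n‖ * ‖y k‖ ≤ ‖d n‖ * M' :=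
      mul_le_mul_of_nonneg_left (hMy k) (norm_nonneg _)
    constructor
    · linarith [abs_le.1 (le_trans h1 h2)]
    · linarith [(abs_le.1 (le_trans h1 h2)).2]
  obtain ⟨f, hfK, φ, hφ, hconv⟩ := hKcomp.tendsto_subseq hmem
  have hptw : ∀ n, Tendsto (fun k => ⟪d n, y (φ k)⟫_ℝ) atTop (nhds (f n)) := by
    intro n
    have := tendsto_pi_nhds.1 hconv n
    exact this
  -- every coordinate functional converges along φ
  have hinner_eq : ∀ (v : H) (k : ℕ),
      ⟪v, y k⟫_ℝ = ⟪(V.orthogonalProjectionOnto v : H), y k⟫_ℝ := by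
    intro v k
    have hperp : v - (V.orthogonalProjectionOnto v : H) ∈ Vᗮ :=
      Submodule.sub_starProjection_mem_orthogonal (K := V) v
    have := (Submodule.mem_orthogonal V _).1 hperp (y k) (hyV k)
    have h0 : ⟪v - (V.orthogonalProjectionOnto v : H), y k⟫_ℝ = 0 := by
      rw [real_inner_comm]; exact this
    rw [inner_sub_left] at h0
    linarith
  have hcauchy : ∀ v : H, CauchySeq (fun k => ⟪v, y (φ k)⟫_ℝ) := by
    intro v
    rw [Metric.cauchySeq_iff]
    intro ε hε
    set Pv : H := (V.orthogonalProjectionOnto v : H) with hPv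
    have hPvV : Pv ∈ V := (V.orthogonalProjectionOnto v).2
    obtain ⟨n, hn⟩ := hdense Pv hPvV (ε/(4*(M'+1))) (by positivity)
    obtain ⟨N, hN⟩ := Metric.cauchySeq_iff.1 (hptw n).cauchySeq (ε/2) (by linarith)
    refine ⟨N, fun j hj k hk => ?_⟩
    have key : ∀ m, |⟪v, y (φ m)⟫_ℝ - ⟪d n, y (φ m)⟫_ℝ| ≤ ε/4 := by
      intro m
      rw [hinner_eq v (φ m), ← hPv, ← inner_sub_left]
      have h1 : |⟪Pv - d n, y (φ m)⟫_ℝ| ≤ ‖Pv - d n‖ * ‖y (φ m)‖ := abs_real_inner_le_norm _ _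
      have h2 : ‖Pv - d n‖ * ‖y (φ m)‖ ≤ (ε/(4*(M'+1))) * M' := by
        apply mul_le_mul hn.le (hMy _) (norm_nonneg _) (by positivity)
      have h3 : (ε/(4*(M'+1))) * M' ≤ ε/4 := by
        rw [div_mul_eq_mul_div, div_le_div_iff₀ (by positivity) (by norm_num)]
        nlinarith
      linarith
    have hd1 := hN j hj k hk
    rw [Real.dist_eq] at hd1 ⊢
    have k1 := key j
    have k2 := key k
    have : |⟪v, y (φ j)⟫_ℝ - ⟪v, y (φ k)⟫_ℝ| ≤
        |⟪v, y (φ j)⟫_ℝ - ⟪d n, y (φ j)⟫_ℝ| + |⟪d n, y (φ j)⟫_ℝ - ⟪d n, y (φ k)⟫_ℝ|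
        + |⟪d n, y (φ k)⟫_ℝ - ⟪v, y (φ k)⟫_ℝ| := by
      have := abs_sub_abs_le_abs_sub (⟪v, y (φ j)⟫_ℝ) (⟪v, y (φ k)⟫_ℝ)
      calc |⟪v, y (φ j)⟫_ℝ - ⟪v, y (φ k)⟫_ℝ| = |(⟪v, y (φ j)⟫_ℝ - ⟪d n, y (φ j)⟫_ℝ)
            + (⟪d n, y (φ j)⟫_ℝ - ⟪d n, y (φ k)⟫_ℝ) + (⟪d n, y (φ k)⟫_ℝ - ⟪v, y (φ k)⟫_ℝ)| := by
            ring_nf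
        _ ≤ _ := by
            exact le_trans (abs_add_le _ _) (by gcongr; exact abs_add_le _ _)
    have k3 : |⟪d n, y (φ k)⟫_ℝ - ⟪v, y (φ k)⟫_ℝ| ≤ ε/4 := by rw [abs_sub_comm]; exact key k
    linarith
  have hL : ∀ v : H, ∃ l : ℝ, Tendsto (fun k => ⟪v, y (φ k)⟫_ℝ) atTop (nhds l) :=
    fun v => cauchySeq_tendsto_of_complete (hcauchy v)
  choose L hLt using hL
  have hadd : ∀ v v', L (v + v') = L v + L v' := by
    intro v v'
    refine tendsto_nhds_unique (hLt (v + v')) ?_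
    have := (hLt v).add (hLt v')
    simpa [inner_add_left] using this
  have hsmul : ∀ (r : ℝ) (v : H), L (r • v) = r * L v := by
    intro r v
    refine tendsto_nhds_unique (hLt (r • v)) ?_
    have := (hLt v).const_mul r
    simpa [real_inner_smul_left] using this
  have hbd : ∀ v, ‖L v‖ ≤ M' * ‖v‖ := by
    intro v
    rw [Real.norm_eq_abs]
    refine le_of_tendsto (hLt v).abs (Filter.Eventually.of_forall fun k => ?_)
    calc |⟪v, y (φ k)⟫_ℝ| ≤ ‖v‖ * ‖y (φ k)‖ := abs_real_inner_le_norm _ _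
      _ ≤ ‖v‖ * M' := mul_le_mul_of_nonneg_left (hMy _) (norm_nonneg _)
      _ = M' * ‖v‖ := mul_comm _ _
  let Lmap : H →ₗ[ℝ] ℝ :=
    { toFun := L, map_add' := hadd, map_smul' := hsmul }
  let Lcont : H →L[ℝ] ℝ := LinearMap.mkContinuous Lmap M' hbd
  set z : H := (InnerProductSpace.toDual ℝ H).symm Lcont with hz
  refine ⟨φ, hφ, z, fun v => ?_⟩
  have hzv : ⟪z, v⟫_ℝ = L v := InnerProductSpace.toDual_symm_apply
  rw [real_inner_comm, hzv]
  exact hLt v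

set_option maxHeartbeats 1000000 in
theorem stmt_17 {H : Type*} [NormedAddCommGroup H] [InnerProductSpace ℝ H] [CompleteSpace H]
    (D : Set H) (hne : D.Nonempty) (hcl : IsClosed D) (hconv : Convex ℝ D)
    (T : ℕ → H → H) (hmaps : ∀ i, Set.MapsTo (T i) D D)
    (hFNE : ∀ i, ∀ x ∈ D, ∀ y ∈ D, ‖T i x - T i y‖ ^ 2 ≤ ⟪x - y, T i x - T i y⟫_ℝ)
    (F : Set H) (hFdef : F = {x | x ∈ D ∧ ∀ i, T i x = x}) (hF : F.Nonempty)
    (w : ℕ → ℝ) (hw : ∀ i, 0 < w i) (hw1 : HasSum w 1)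
    (lam : ℕ → ℝ) (hlam01 : ∀ k, lam k ∈ Set.Icc (0 : ℝ) 1)
    (hlam0 : Filter.Tendsto lam Filter.atTop (nhds 0))
    (hlamdiv : ¬ Summable lam)
    (hlamvar : Summable fun k => |lam (k + 1) - lam k|)
    (u : H) (hu : u ∈ D) (x : ℕ → H) (hx0 : x 0 ∈ D)
    (hiter : ∀ k, x (k + 1) = lam k • u + (1 - lam k) • ∑' i, w i • T i (x k)) :
    ∃ p ∈ F, (∀ z ∈ F, ‖u - p‖ ≤ ‖u - z‖) ∧
      Filter.Tendsto x Filter.atTop (nhds p) := by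
  classical
  obtain ⟨q0, hq0⟩ := hF
  have hq0' : q0 ∈ D ∧ ∀ i, T i q0 = q0 := by rw [hFdef] at hq0; exact hq0
  have hq0D : q0 ∈ D := hq0'.1
  have hq0fix : ∀ i, T i q0 = q0 := hq0'.2
  have hw0 : ∀ i, (0:ℝ) ≤ w i := fun i => (hw i).le
  have hwsum : Summable w := hw1.summable
  have hl0 : ∀ k, 0 ≤ lam k := fun k => (hlam01 k).1
  have hl1 : ∀ k, lam k ≤ 1 := fun k => (hlam01 k).2
  -- each T i is nonexpansive on D
  have hne' : ∀ i, ∀ a ∈ D, ∀ b ∈ D, ‖T i a - T i b‖ ≤ ‖a - b‖ := by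
    intro i a ha b hb
    rcases eq_or_lt_of_le (norm_nonneg (T i a - T i b)) with h | h
    · rw [← h]; exact norm_nonneg _
    · have h1 := hFNE i a ha b hb
      have h2 : ⟪a - b, T i a - T i b⟫_ℝ ≤ ‖a - b‖ * ‖T i a - T i b‖ := real_inner_le_norm _ _
      nlinarith
  -- summability of the weighted family
  have hTbd : ∀ a ∈ D, ∀ i, ‖T i a‖ ≤ ‖q0‖ + ‖a - q0‖ := by
    intro a ha i
    have h1 : ‖T i a - q0‖ ≤ ‖a - q0‖ := by
      have := hne' i a ha q0 hq0D
      rwa [hq0fix i] at this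
    calc ‖T i a‖ = ‖q0 + (T i a - q0)‖ := by congr 1; abel
      _ ≤ ‖q0‖ + ‖T i a - q0‖ := norm_add_le _ _
      _ ≤ ‖q0‖ + ‖a - q0‖ := by linarith
  have hsummL : ∀ a ∈ D, Summable (fun i => w i • T i a) := by
    intro a ha
    apply Summable.of_norm
    apply Summable.of_nonneg_of_le (fun i => norm_nonneg _) (fun i => ?_)
      (hwsum.mul_right (‖q0‖ + ‖a - q0‖))
    rw [norm_smul, Real.norm_eq_abs, abs_of_nonneg (hw0 i)]
    exact mul_le_mul_of_nonneg_left (hTbd a ha i) (hw0 i)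
  set S : H → H := fun a => ∑' i, w i • T i a with hSdef
  have hShs : ∀ a ∈ D, HasSum (fun i => w i • T i a) (S a) := fun a ha => (hsummL a ha).hasSum
  -- S q = q for q ∈ F
  have hSq : ∀ q, q ∈ D → (∀ i, T i q = q) → S q = q := by
    intro q hq hfix
    have h1 : HasSum (fun i => w i • q) q := by
      have := hw1.smul_const q
      rwa [one_smul] at this
    have h2 : (fun i => w i • T i q) = fun i => w i • q := by
      funext i; rw [hfix i]
    rw [hSdef]
    simp only [h2]
    exact h1.tsum_eq
  -- nonexpansiveness of S on D
  have hSne : ∀ a ∈ D, ∀ b ∈ D, ‖S a - S b‖ ≤ ‖a - b‖ := by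
    intro a ha b hb
    have hdiff : HasSum (fun i => w i • (T i a - T i b)) (S a - S b) := by
      have := (hShs a ha).sub (hShs b hb)
      simpa [smul_sub] using this
    have hsn : Summable fun i => ‖w i • (T i a - T i b)‖ := by
      apply Summable.of_nonneg_of_le (fun i => norm_nonneg _) (fun i => ?_)
        (hwsum.mul_right ‖a - b‖)
      rw [norm_smul, Real.norm_eq_abs, abs_of_nonneg (hw0 i)]
      exact mul_le_mul_of_nonneg_left (hne' i a ha b hb) (hw0 i)
    calc ‖S a - S b‖ = ‖∑' i, w i • (T i a - T i b)‖ := by rw [hdiff.tsum_eq]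
      _ ≤ ∑' i, ‖w i • (T i a - T i b)‖ := norm_tsum_le_tsum_norm hsn
      _ ≤ ∑' i, w i * ‖a - b‖ := by
          apply Summable.tsum_le_tsum _ hsn (hwsum.mul_right ‖a - b‖)
          intro i
          rw [norm_smul, Real.norm_eq_abs, abs_of_nonneg (hw0 i)]
          exact mul_le_mul_of_nonneg_left (hne' i a ha b hb) (hw0 i)
      _ = ‖a - b‖ := by
          rw [tsum_mul_right, hw1.tsum_eq, one_mul]
  -- S maps D into D
  have hSD : ∀ a ∈ D, S a ∈ D := by
    intro a ha
    have hts : Tendsto (fun n => ∑ i ∈ Finset.range n, w i • T i a) atTop (nhds (S a)) :=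
      (hShs a ha).tendsto_sum_nat
    have hcs : Tendsto (fun n => ∑ i ∈ Finset.range n, w i) atTop (nhds 1) :=
      hw1.tendsto_sum_nat
    have hcinv : Tendsto (fun n => (∑ i ∈ Finset.range n, w i)⁻¹) atTop (nhds 1) := by
      have := hcs.inv₀ one_ne_zero
      simpa using this
    have htot : Tendsto (fun n => (∑ i ∈ Finset.range n, w i)⁻¹ •
        ∑ i ∈ Finset.range n, w i • T i a) atTop (nhds (S a)) := by
      have := hcinv.smul hts
      simpa using this
    have hev : ∀ᶠ n in atTop, (∑ i ∈ Finset.range n, w i)⁻¹ •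
        (∑ i ∈ Finset.range n, w i • T i a) ∈ D := by
      have hpos : ∀ᶠ n in atTop, 0 < ∑ i ∈ Finset.range n, w i :=
        hcs.eventually (eventually_gt_nhds one_pos)
      filter_upwards [hpos] with n hn
      have h1 : (∑ i ∈ Finset.range n, w i)⁻¹ • (∑ i ∈ Finset.range n, w i • T i a)
          = ∑ i ∈ Finset.range n, ((∑ j ∈ Finset.range n, w j)⁻¹ * w i) • T i a := by
        rw [Finset.smul_sum]
        congr 1
        funext i
        rw [smul_smul]
      rw [h1]
      apply hconv.sum_mem
      · intro i _
        exact mul_nonneg (inv_nonneg.2 hn.le) (hw0 i)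
      · rw [← Finset.mul_sum]
        exact inv_mul_cancel₀ hn.ne'
      · intro i _
        exact hmaps i ha
    exact hcl.mem_of_tendsto htot hev
  -- the iterates stay in D
  have hxD : ∀ k, x k ∈ D := by
    intro k
    induction k with
    | zero => exact hx0
    | succ k ih =>
      rw [hiter k]
      exact hconv hu (hSD (x k) ih) (hl0 k) (by linarith [hl1 k]) (by ring)
  -- F is convex
  have hFconv : Convex ℝ F := by
    rw [hFdef]
    intro a ha b hb t s ht hs hts
    have haD : a ∈ D := ha.1
    have hbD : b ∈ D := hb.1
    have hmD : t • a + s • b ∈ D := hconv haD hbD ht hs hts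
    refine ⟨hmD, fun i => ?_⟩
    set m := t • a + s • b with hm
    have hIa : ⟪T i m - m, T i m - a⟫_ℝ ≤ 0 := by
      have h1 := hFNE i m hmD a haD
      rw [ha.2 i] at h1
      have h2 : ⟪T i m - m, T i m - a⟫_ℝ = ‖T i m - a‖^2 - ⟪m - a, T i m - a⟫_ℝ := by
        rw [← real_inner_self_eq_norm_sq, ← inner_sub_left]
        congr 1
        abel
      linarith
    have hIb : ⟪T i m - m, T i m - b⟫_ℝ ≤ 0 := by
      have h1 := hFNE i m hmD b hbD
      rw [hb.2 i] at h1
      have h2 : ⟪T i m - m, T i m - b⟫_ℝ = ‖T i m - b‖^2 - ⟪m - b, T i m - b⟫_ℝ := by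
        rw [← real_inner_self_eq_norm_sq, ← inner_sub_left]
        congr 1
        abel
      linarith
    have hsplit : T i m - m = t • (T i m - a) + s • (T i m - b) := by
      have hs' : s = 1 - t := by linarith
      rw [hm, hs']
      module
    have hnorm : ‖T i m - m‖^2 = t * ⟪T i m - m, T i m - a⟫_ℝ + s * ⟪T i m - m, T i m - b⟫_ℝ := by
      rw [← real_inner_self_eq_norm_sq]
      nth_rewrite 2 [hsplit]
      rw [inner_add_right, real_inner_smul_right, real_inner_smul_right]
    have hz : ‖T i m - m‖^2 ≤ 0 := by
      rw [hnorm]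
      have := mul_nonpos_of_nonneg_of_nonpos ht hIa
      have := mul_nonpos_of_nonneg_of_nonpos hs hIb
      linarith
    have : ‖T i m - m‖ = 0 := by nlinarith [norm_nonneg (T i m - m)]
    have := norm_eq_zero.1 this
    rwa [sub_eq_zero] at this
  -- F is closed
  have hFcl : IsClosed F := by
    apply IsSeqClosed.isClosed
    intro xn q hmem htend
    have hmemD : ∀ n, xn n ∈ D := fun n => ((hFdef ▸ hmem n : _)).1
    have hqD : q ∈ D := hcl.isSeqClosed hmemD htend
    rw [hFdef]
    refine ⟨hqD, fun i => ?_⟩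
    have hb : ∀ n, ‖T i q - q‖ ≤ 2 * ‖q - xn n‖ := by
      intro n
      have hfixn : T i (xn n) = xn n := (hFdef ▸ hmem n : _).2 i
      calc ‖T i q - q‖ = ‖(T i q - T i (xn n)) + (xn n - q)‖ := by rw [hfixn]; congr 1; abel
        _ ≤ ‖T i q - T i (xn n)‖ + ‖xn n - q‖ := norm_add_le _ _
        _ ≤ ‖q - xn n‖ + ‖xn n - q‖ := by linarith [hne' i q hqD (xn n) (hmemD n)]
        _ = 2 * ‖q - xn n‖ := by rw [norm_sub_rev (xn n) q]; ring
    have htz : Tendsto (fun n => 2 * ‖q - xn n‖) atTop (nhds 0) := by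
      have h0 : Tendsto (fun n => q - xn n) atTop (nhds 0) := by
        have := htend.const_sub q
        rwa [sub_self] at this
      have := h0.norm
      rw [norm_zero] at this
      simpa using this.const_mul 2
    have : ‖T i q - q‖ ≤ 0 := ge_of_tendsto htz (Filter.Eventually.of_forall hb)
    have : ‖T i q - q‖ = 0 := le_antisymm this (norm_nonneg _)
    have := norm_eq_zero.1 this
    rwa [sub_eq_zero] at this
  -- projection of u onto F
  obtain ⟨p, hpF, hproj⟩ :=
    exists_norm_eq_iInf_of_complete_convex ⟨q0, hq0⟩ (hFcl.isComplete) hFconv u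
  have hvar : ∀ z ∈ F, ⟪u - p, z - p⟫_ℝ ≤ 0 :=
    (norm_eq_iInf_iff_real_inner_le_zero hFconv hpF).1 hproj
  have hmin : ∀ z ∈ F, ‖u - p‖ ≤ ‖u - z‖ := by
    intro z hz
    have h1 : u - z = (u - p) - (z - p) := by abel
    have h2 : ‖u - z‖^2 = ‖u - p‖^2 - 2 * ⟪u - p, z - p⟫_ℝ + ‖z - p‖^2 := by
      rw [h1, norm_sub_sq_real]
    have h3 := hvar z hz
    nlinarith [norm_nonneg (u - z), norm_nonneg (u - p), sq_nonneg (‖z - p‖)]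
  have hpD : p ∈ D := (hFdef ▸ hpF : _).1
  have hpfix : ∀ i, T i p = p := (hFdef ▸ hpF : _).2
  have hSp : S p = p := hSq p hpD hpfix
  -- restated iteration
  have hiter' : ∀ k, x (k + 1) = lam k • u + (1 - lam k) • S (x k) := by
    intro k
    rw [hSdef]
    exact hiter k
  -- boundedness of the iterates
  set R : ℝ := max ‖x 0 - p‖ ‖u - p‖ with hR
  have hR0 : (0:ℝ) ≤ R := le_trans (norm_nonneg _) (le_max_left _ _)
  have hup : ‖u - p‖ ≤ R := le_max_right _ _
  have hSxk : ∀ k, ‖S (x k) - p‖ ≤ ‖x k - p‖ := by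
    intro k
    have := hSne (x k) (hxD k) p hpD
    rwa [hSp] at this
  have hxb : ∀ k, ‖x k - p‖ ≤ R := by
    intro k
    induction k with
    | zero => exact le_max_left _ _
    | succ k ih =>
      have hsplit : x (k+1) - p = lam k • (u - p) + (1 - lam k) • (S (x k) - p) := by
        rw [hiter' k]; module
      have h1 : ‖x (k+1) - p‖ ≤ lam k * ‖u - p‖ + (1 - lam k) * ‖S (x k) - p‖ := by
        rw [hsplit]
        refine le_trans (norm_add_le _ _) ?_
        rw [norm_smul, norm_smul, Real.norm_eq_abs, Real.norm_eq_abs,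
          abs_of_nonneg (hl0 k), abs_of_nonneg (by linarith [hl1 k] : (0:ℝ) ≤ 1 - lam k)]
      have h2 : ‖S (x k) - p‖ ≤ R := le_trans (hSxk k) ih
      have hl0k := hl0 k
      have hl1k := hl1 k
      nlinarith
  set C : ℝ := ‖u - p‖ + R with hC
  have hC0 : (0:ℝ) ≤ C := by positivity
  have huS : ∀ k, ‖u - S (x k)‖ ≤ C := by
    intro k
    have h1 : u - S (x k) = (u - p) - (S (x k) - p) := by abel
    rw [h1, hC]
    refine le_trans (norm_sub_le _ _) ?_
    have := le_trans (hSxk k) (hxb k)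
    linarith
  -- successive differences tend to zero
  set a1 : ℕ → ℝ := fun k => ‖x (k+1) - x k‖ with ha1
  have hrec1 : ∀ k, a1 (k+1) ≤ (1 - lam (k+1)) * a1 k + lam (k+1) * 0
      + |lam (k+1) - lam k| * C := by
    intro k
    have hsplit : x (k+2) - x (k+1) = (lam (k+1) - lam k) • (u - S (x k))
        + (1 - lam (k+1)) • (S (x (k+1)) - S (x k)) := by
      rw [hiter' (k+1), hiter' k]; module
    have h1 : a1 (k+1) ≤ |lam (k+1) - lam k| * ‖u - S (x k)‖
        + (1 - lam (k+1)) * ‖S (x (k+1)) - S (x k)‖ := by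
      rw [ha1]
      simp only
      rw [hsplit]
      refine le_trans (norm_add_le _ _) ?_
      rw [norm_smul, norm_smul, Real.norm_eq_abs, Real.norm_eq_abs,
        abs_of_nonneg (by linarith [hl1 (k+1)] : (0:ℝ) ≤ 1 - lam (k+1))]
    have h2 : ‖S (x (k+1)) - S (x k)‖ ≤ a1 k := hSne (x (k+1)) (hxD (k+1)) (x k) (hxD k)
    have h3 : |lam (k+1) - lam k| * ‖u - S (x k)‖ ≤ |lam (k+1) - lam k| * C :=
      mul_le_mul_of_nonneg_left (huS k) (abs_nonneg _)
    have h4 : (1 - lam (k+1)) * ‖S (x (k+1)) - S (x k)‖ ≤ (1 - lam (k+1)) * a1 k :=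
      mul_le_mul_of_nonneg_left h2 (by linarith [hl1 (k+1)])
    linarith
  have hdiv1 : Tendsto (fun n => ∑ k ∈ Finset.range n, lam (k+1)) atTop atTop := by
    have hns : ¬ Summable (fun k => lam (k+1)) := by
      intro h
      exact hlamdiv ((summable_nat_add_iff 1).1 h)
    exact (not_summable_iff_tendsto_nat_atTop_of_nonneg (fun k => hl0 (k+1))).1 hns
  have ha1to0 : Tendsto a1 atTop (nhds 0) := by
    refine halpern_numeric a1 (fun k => lam (k+1)) (fun _ => 0)
      (fun k => |lam (k+1) - lam k| * C) (fun k => norm_nonneg _)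
      (fun k => hl0 (k+1)) (fun k => hl1 (k+1)) hdiv1
      (fun k => mul_nonneg (abs_nonneg _) hC0) (hlamvar.mul_right C)
      (fun ε hε => Filter.Eventually.of_forall fun k => hε.le) hrec1
  -- asymptotic regularity
  have hreg : Tendsto (fun k => ‖x k - S (x k)‖) atTop (nhds 0) := by
    have hb : ∀ k, ‖x k - S (x k)‖ ≤ a1 k + lam k * C := by
      intro k
      have h1 : x (k+1) - S (x k) = lam k • (u - S (x k)) := by
        rw [hiter' k]; module
      have h2 : ‖x (k+1) - S (x k)‖ ≤ lam k * C := by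
        rw [h1, norm_smul, Real.norm_eq_abs, abs_of_nonneg (hl0 k)]
        exact mul_le_mul_of_nonneg_left (huS k) (hl0 k)
      have h3 : x k - S (x k) = (x k - x (k+1)) + (x (k+1) - S (x k)) := by abel
      calc ‖x k - S (x k)‖ ≤ ‖x k - x (k+1)‖ + ‖x (k+1) - S (x k)‖ := by
            rw [h3]; exact norm_add_le _ _
        _ ≤ a1 k + lam k * C := by
            rw [norm_sub_rev]
            exact add_le_add le_rfl h2
    have hz : Tendsto (fun k => a1 k + lam k * C) atTop (nhds 0) := by
      have := ha1to0.add (hlam0.mul_const C)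
      simpa using this
    exact squeeze_zero (fun k => norm_nonneg _) hb hz
  -- fixed points of S are common fixed points
  have hfixS : ∀ z ∈ D, S z = z → z ∈ F := by
    intro z hzD hSz
    rw [hFdef]
    refine ⟨hzD, fun i => ?_⟩
    have hterm : ∀ j, ‖T j z - z‖^2 ≤ ⟪q0 - z, T j z - z⟫_ℝ := by
      intro j
      have h1 := hFNE j z hzD q0 hq0D
      rw [hq0fix j] at h1
      have h2 : ⟪T j z - z, T j z - q0⟫_ℝ ≤ 0 := by
        have he : ⟪T j z - z, T j z - q0⟫_ℝ = ‖T j z - q0‖^2 - ⟪z - q0, T j z - q0⟫_ℝ := by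
          rw [← real_inner_self_eq_norm_sq, ← inner_sub_left]
          congr 1
          abel
        linarith
      have h3 : ‖T j z - z‖^2 - ⟪q0 - z, T j z - z⟫_ℝ = ⟪T j z - q0, T j z - z⟫_ℝ := by
        rw [← real_inner_self_eq_norm_sq, ← inner_sub_left]
        congr 1
        abel
      have h4 : ⟪T j z - q0, T j z - z⟫_ℝ ≤ 0 := by
        rw [real_inner_comm]; exact h2
      linarith
    have hzsum : HasSum (fun j => w j • (T j z - z)) 0 := by
      have h1 : HasSum (fun j => w j • z) z := by
        have := hw1.smul_const z
        rwa [one_smul] at this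
      have := (hShs z hzD).sub h1
      rw [hSz, sub_self] at this
      simpa [smul_sub] using this
    have happ : HasSum (fun j => w j * ⟪q0 - z, T j z - z⟫_ℝ) 0 := by
      have := ContinuousLinearMap.hasSum (innerSL ℝ (q0 - z)) hzsum
      simpa only [innerSL_apply_apply, real_inner_smul_right, inner_zero_right] using this
    have hnn : ∀ j, 0 ≤ w j * ⟪q0 - z, T j z - z⟫_ℝ := by
      intro j
      have := hterm j
      have := sq_nonneg ‖T j z - z‖
      nlinarith [hw0 j]
    have hle : w i * ⟪q0 - z, T i z - z⟫_ℝ ≤ 0 :=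
      le_hasSum happ i (fun j _ => hnn j)
    have hsq : ‖T i z - z‖^2 ≤ 0 := by
      have h1 := hterm i
      have h2 := hw i
      nlinarith [sq_nonneg ‖T i z - z‖]
    have : ‖T i z - z‖ = 0 := by nlinarith [norm_nonneg (T i z - z)]
    have := norm_eq_zero.1 this
    rwa [sub_eq_zero] at this
  -- the key limsup estimate
  have hkey : ∀ ε > 0, ∀ᶠ k in atTop, 2 * ⟪u - p, x (k+1) - p⟫_ℝ ≤ ε := by
    by_contra hcon
    push_neg at hcon
    obtain ⟨ε, hε, hfreq⟩ := hcon
    have hfreq' : ∃ᶠ k in atTop, ε < 2 * ⟪u - p, x (k+1) - p⟫_ℝ := by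
      refine hfreq.mono fun k hk => ?_
      exact hk
    obtain ⟨ψ, hψmono, hψ⟩ := Filter.extraction_of_frequently_atTop hfreq'
    set y' : ℕ → H := fun n => x (ψ n + 1) with hy'
    have hbd : ∀ n, ‖y' n‖ ≤ R + ‖p‖ := by
      intro n
      calc ‖y' n‖ = ‖(x (ψ n + 1) - p) + p‖ := by rw [hy']; simp
        _ ≤ ‖x (ψ n + 1) - p‖ + ‖p‖ := norm_add_le _ _
        _ ≤ R + ‖p‖ := by linarith [hxb (ψ n + 1)]
    obtain ⟨φ, hφmono, z, hweak⟩ := weak_cluster y' (R + ‖p‖) hbd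
    have hθ : Tendsto (fun j => ψ (φ j) + 1) atTop atTop := by
      have h1 : Tendsto (fun j => ψ (φ j)) atTop atTop :=
        (hψmono.comp hφmono).tendsto_atTop
      exact tendsto_atTop_mono (fun j => Nat.le_succ _) h1
    have hy'D : ∀ j, y' (φ j) ∈ D := fun j => hxD _
    have hzD : z ∈ D := by
      by_contra hzD
      obtain ⟨f, c, hfa, hcz⟩ := geometric_hahn_banach_closed_point hconv hcl hzD
      set vf : H := (InnerProductSpace.toDual ℝ H).symm f with hvf0
      have hvf : ∀ v : H, ⟪vf, v⟫_ℝ = f v := fun v => InnerProductSpace.toDual_symm_apply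
      have h1 : Tendsto (fun j => f (y' (φ j))) atTop (nhds (f z)) := by
        have := hweak vf
        simp only [hvf] at this
        exact this
      have h2 : f z ≤ c :=
        le_of_tendsto h1 (Filter.Eventually.of_forall fun j => (hfa _ (hy'D j)).le)
      linarith
    have hregθ : Tendsto (fun j => ‖y' (φ j) - S (y' (φ j))‖) atTop (nhds 0) :=
      hreg.comp hθ
    have hSz : S z = z := by
      have hkey2 : ∀ j, ‖z - S z‖^2 ≤ ‖y' (φ j) - S (y' (φ j))‖^2
          + 2 * ‖y' (φ j) - S (y' (φ j))‖ * (R + ‖p‖ + ‖z‖)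
          - 2 * ⟪y' (φ j) - z, z - S z⟫_ℝ := by
        intro j
        set Y := y' (φ j) with hY
        set e := ‖Y - S Y‖ with hearg
        have he0 : 0 ≤ e := norm_nonneg _
        have h1 : ‖Y - S z‖ ≤ e + ‖Y - z‖ := by
          have ht : Y - S z = (Y - S Y) + (S Y - S z) := by abel
          calc ‖Y - S z‖ ≤ ‖Y - S Y‖ + ‖S Y - S z‖ := by rw [ht]; exact norm_add_le _ _
            _ ≤ e + ‖Y - z‖ := add_le_add le_rfl (hSne Y (hy'D j) z hzD)
        have h2 : ‖Y - S z‖^2 = ‖Y - z‖^2 + 2 * ⟪Y - z, z - S z⟫_ℝ + ‖z - S z‖^2 := by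
          rw [show Y - S z = (Y - z) + (z - S z) by abel, norm_add_sq_real]
        have h3 : ‖Y - z‖ ≤ R + ‖p‖ + ‖z‖ := by
          calc ‖Y - z‖ ≤ ‖Y‖ + ‖z‖ := norm_sub_le _ _
            _ ≤ R + ‖p‖ + ‖z‖ := by linarith [hbd (φ j)]
        have h4 : ‖Y - S z‖^2 ≤ (e + ‖Y - z‖)^2 := by
          apply sq_le_sq' _ h1
          have := norm_nonneg (Y - S z)
          have := norm_nonneg (Y - z)
          linarith
        nlinarith [norm_nonneg (Y - z)]
      have hinn : Tendsto (fun j => ⟪y' (φ j) - z, z - S z⟫_ℝ) atTop (nhds 0) := by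
        have h1 := (hweak (z - S z)).sub_const ⟪z - S z, z⟫_ℝ
        rw [sub_self] at h1
        refine h1.congr fun j => ?_
        rw [← inner_sub_right, real_inner_comm]
      have htend0 : Tendsto (fun j => ‖y' (φ j) - S (y' (φ j))‖^2
          + 2 * ‖y' (φ j) - S (y' (φ j))‖ * (R + ‖p‖ + ‖z‖)
          - 2 * ⟪y' (φ j) - z, z - S z⟫_ℝ) atTop (nhds 0) := by
        have t1 : Tendsto (fun j => ‖y' (φ j) - S (y' (φ j))‖^2) atTop (nhds 0) := by
          have := hregθ.mul hregθ
          simpa [pow_two] using this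
        have t2 : Tendsto (fun j => 2 * ‖y' (φ j) - S (y' (φ j))‖ * (R + ‖p‖ + ‖z‖))
            atTop (nhds 0) := by
          have := (hregθ.const_mul 2).mul_const (R + ‖p‖ + ‖z‖)
          simpa [mul_assoc] using this
        have t3 : Tendsto (fun j => 2 * ⟪y' (φ j) - z, z - S z⟫_ℝ) atTop (nhds 0) := by
          have := hinn.const_mul 2
          simpa using this
        have := (t1.add t2).sub t3
        simpa using this
      have hfin : ‖z - S z‖^2 ≤ 0 :=
        ge_of_tendsto htend0 (Filter.Eventually.of_forall hkey2)
      have : ‖z - S z‖ = 0 := by nlinarith [norm_nonneg (z - S z)]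
      have := norm_eq_zero.1 this
      have := sub_eq_zero.1 this
      exact this.symm
    have hzF : z ∈ F := hfixS z hzD hSz
    have hlim : Tendsto (fun j => 2 * ⟪u - p, y' (φ j) - p⟫_ℝ) atTop
        (nhds (2 * ⟪u - p, z - p⟫_ℝ)) := by
      have h1 := (hweak (u - p)).sub_const ⟪u - p, p⟫_ℝ
      have h2 := h1.const_mul 2
      have heq2 : 2 * (⟪u - p, z⟫_ℝ - ⟪u - p, p⟫_ℝ) = 2 * ⟪u - p, z - p⟫_ℝ := by
        rw [inner_sub_right]
      rw [← heq2]
      exact h2.congr fun j => by rw [inner_sub_right]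
    have hεle : ε ≤ 2 * ⟪u - p, z - p⟫_ℝ :=
      ge_of_tendsto hlim (Filter.Eventually.of_forall fun j => (hψ (φ j)).le)
    have := hvar z hzF
    linarith
  -- final convergence
  set a2 : ℕ → ℝ := fun k => ‖x k - p‖^2 with ha2
  have hrec2 : ∀ k, a2 (k+1) ≤ (1 - lam k) * a2 k
      + lam k * (2 * ⟪u - p, x (k+1) - p⟫_ℝ) + 0 := by
    intro k
    set A : H := (1 - lam k) • (S (x k) - p) with hA
    set B : H := lam k • (u - p) with hB
    have hx1 : x (k+1) - p = A + B := by
      rw [hA, hB, hiter' k]; module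
    have hAB : ‖A + B‖^2 = ‖A‖^2 + 2 * ⟪A, B⟫_ℝ + ‖B‖^2 := norm_add_sq_real A B
    have hBip : ⟪B, A + B⟫_ℝ = ⟪A, B⟫_ℝ + ‖B‖^2 := by
      rw [inner_add_right, real_inner_comm B A, real_inner_self_eq_norm_sq]
    have hBx : ⟪B, x (k+1) - p⟫_ℝ = lam k * ⟪u - p, x (k+1) - p⟫_ℝ := by
      rw [hB, real_inner_smul_left]
    have hAn : ‖A‖^2 = (1 - lam k)^2 * ‖S (x k) - p‖^2 := by
      rw [hA, norm_smul, Real.norm_eq_abs,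
        abs_of_nonneg (by linarith [hl1 k] : (0:ℝ) ≤ 1 - lam k), mul_pow]
    have hSb := hSxk k
    have hl0k := hl0 k
    have hl1k := hl1 k
    have h5 : ‖x (k+1) - p‖^2 = ‖A‖^2 + 2 * ⟪B, x (k+1) - p⟫_ℝ - ‖B‖^2 := by
      rw [hx1, hAB, hBip]; ring
    have hss : ‖S (x k) - p‖^2 ≤ ‖x k - p‖^2 :=
      pow_le_pow_left₀ (norm_nonneg _) hSb 2
    have h6 : (1 - lam k)^2 * ‖S (x k) - p‖^2 ≤ (1 - lam k) * ‖x k - p‖^2 := by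
      calc (1 - lam k)^2 * ‖S (x k) - p‖^2 ≤ (1 - lam k)^2 * ‖x k - p‖^2 :=
            mul_le_mul_of_nonneg_left hss (sq_nonneg _)
        _ ≤ (1 - lam k) * ‖x k - p‖^2 := by
            apply mul_le_mul_of_nonneg_right _ (sq_nonneg _)
            nlinarith
    show ‖x (k+1) - p‖^2 ≤ (1 - lam k) * ‖x k - p‖^2
      + lam k * (2 * ⟪u - p, x (k+1) - p⟫_ℝ) + 0
    rw [h5, hAn, hBx]
    linarith [sq_nonneg ‖B‖]
  have hdiv0 : Tendsto (fun n => ∑ k ∈ Finset.range n, lam k) atTop atTop :=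
    (not_summable_iff_tendsto_nat_atTop_of_nonneg hl0).1 hlamdiv
  have ha2to0 : Tendsto a2 atTop (nhds 0) := by
    refine halpern_numeric a2 lam (fun k => 2 * ⟪u - p, x (k+1) - p⟫_ℝ) (fun _ => 0)
      (fun k => sq_nonneg _) hl0 hl1 hdiv0 (fun k => le_rfl) summable_zero hkey hrec2
  have hxto : Tendsto x atTop (nhds p) := by
    have h1 : Tendsto (fun k => Real.sqrt (a2 k)) atTop (nhds (Real.sqrt 0)) :=
      (Real.continuous_sqrt.tendsto 0).comp ha2to0
    have h2 : Tendsto (fun k => ‖x k - p‖) atTop (nhds 0) := by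
      rw [Real.sqrt_zero] at h1
      refine h1.congr fun k => ?_
      show Real.sqrt (‖x k - p‖^2) = ‖x k - p‖
      exact Real.sqrt_sq (norm_nonneg _)
    rw [tendsto_iff_norm_sub_tendsto_zero]
    exact h2
  exact ⟨p, hpF, hmin, hxto⟩
end

section
/- Let D be a nonempty closed convex subset of a real Hilbert space H, let D ⊇ C₁, …, C_m be closed convex with C := ⋂ C_i ≠ ∅, let (w_i)_{i=1}^m be strictly positive weights summing to 1 and (λ_k) a steering sequence. Then for any u ∈ D, the sequence x⁰ = u, x^{k+1} = λ_k u + (1 − λ_k) ∑_{i=1}^m w_i P_{C_i}(x^k) converges strongly to P_C(u). -/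
open Filter Finset

lemma aux_prod_zero (lam : ℕ → ℝ) (h0 : ∀ k, 0 ≤ lam k) (h1 : ∀ k, lam k ≤ 1)
    (hdiv : Tendsto (fun n => ∑ j ∈ range n, lam j) atTop atTop) (N : ℕ) :
    Tendsto (fun n => ∏ j ∈ Finset.Ico N n, (1 - lam j)) atTop (nhds 0) := by
  have hnn : ∀ n, 0 ≤ ∏ j ∈ Finset.Ico N n, (1 - lam j) := by
    intro n; exact Finset.prod_nonneg fun j _ => by linarith [h1 j]
  apply squeeze_zero (g := fun n => Real.exp (∑ j ∈ Finset.Ico N n, (-lam j))) hnn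
  · intro n
    calc ∏ j ∈ Finset.Ico N n, (1 - lam j)
        ≤ ∏ j ∈ Finset.Ico N n, Real.exp (-lam j) := by
          apply Finset.prod_le_prod (fun j _ => by linarith [h1 j])
          intro j _
          have := Real.add_one_le_exp (-lam j); linarith
      _ = Real.exp (∑ j ∈ Finset.Ico N n, (-lam j)) := (Real.exp_sum _ _).symm
  · have h3 : Tendsto (fun n => ∑ j ∈ Finset.Ico N n, lam j) atTop atTop := by
      have heq : ∀ᶠ n in atTop, ∑ j ∈ range n, lam j - ∑ j ∈ range N, lam j
          = ∑ j ∈ Finset.Ico N n, lam j := by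
        filter_upwards [eventually_ge_atTop N] with n hn
        rw [Finset.sum_Ico_eq_sub _ hn]
      apply Tendsto.congr' heq
      exact tendsto_atTop_add_const_right _ _ hdiv
    have h4 : Tendsto (fun n => Real.exp (-(∑ j ∈ Finset.Ico N n, lam j))) atTop (nhds 0) :=
      Real.tendsto_exp_atBot.comp (tendsto_neg_atBot_iff.mpr h3)
    exact Tendsto.congr (fun n => by rw [← Finset.sum_neg_distrib]) h4

lemma aux_xu (a lam b : ℕ → ℝ) (ha : ∀ k, 0 ≤ a k)
    (h0 : ∀ k, 0 ≤ lam k) (h1 : ∀ k, lam k ≤ 1)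
    (hdiv : Tendsto (fun n => ∑ j ∈ range n, lam j) atTop atTop)
    (hb : ∀ ε > 0, ∀ᶠ k in atTop, b k ≤ ε)
    (hrec : ∀ k, a (k + 1) ≤ (1 - lam k) * a k + lam k * b k) :
    Tendsto a atTop (nhds 0) := by
  rw [Metric.tendsto_atTop]
  intro ε hε
  obtain ⟨N, hN⟩ := (hb (ε / 2) (by linarith)).exists_forall_of_atTop
  have key : ∀ n, N ≤ n → a n ≤ ε / 2 + a N * ∏ j ∈ Finset.Ico N n, (1 - lam j) := by
    intro n hn
    induction n with
    | zero =>
      have hN0 : N = 0 := Nat.le_zero.mp hn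
      subst hN0
      have : (∏ j ∈ Finset.Ico 0 0, (1 - lam j)) = 1 := by simp
      rw [this]; linarith [ha 0]
    | succ n ih =>
      rcases Nat.lt_or_ge N (n + 1) with h | h
      · have hn' : N ≤ n := Nat.lt_succ_iff.mp h
        have ihn := ih hn'
        have hbn := hN n hn'
        have hprod : ∏ j ∈ Finset.Ico N (n+1), (1 - lam j)
            = (∏ j ∈ Finset.Ico N n, (1 - lam j)) * (1 - lam n) :=
          Finset.prod_Ico_succ_top hn' _
        have hpn : 0 ≤ ∏ j ∈ Finset.Ico N n, (1 - lam j) :=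
          Finset.prod_nonneg fun j _ => by linarith [h1 j]
        have h1n := h1 n; have h0n := h0 n
        calc a (n+1) ≤ (1 - lam n) * a n + lam n * b n := hrec n
          _ ≤ (1 - lam n) * (ε / 2 + a N * ∏ j ∈ Finset.Ico N n, (1 - lam j)) + lam n * (ε/2) := by
              have := ha N
              nlinarith
          _ ≤ ε / 2 + a N * ∏ j ∈ Finset.Ico N (n+1), (1 - lam j) := by
              rw [hprod]; have := ha N; nlinarith
      · have hNe : N = n + 1 := le_antisymm hn h
        subst hNe
        have : (∏ j ∈ Finset.Ico (n+1) (n+1), (1 - lam j)) = 1 := by simp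
        rw [this]; linarith [ha (n+1)]
  have hprod0 := aux_prod_zero lam h0 h1 hdiv N
  have : ∀ᶠ n in atTop, a N * ∏ j ∈ Finset.Ico N n, (1 - lam j) < ε / 2 := by
    have := (hprod0.const_mul (a N))
    simp only [mul_zero] at this
    exact this.eventually_lt_const (by linarith)
  rw [eventually_atTop] at this
  obtain ⟨M, hM⟩ := this
  refine ⟨max N M, fun n hn => ?_⟩
  have h1' := key n (le_trans (le_max_left _ _) hn)
  have h2' := hM n (le_trans (le_max_right _ _) hn)
  rw [Real.dist_eq, abs_of_nonneg (by linarith [ha n] : (0:ℝ) ≤ a n - 0)]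
  simp only [sub_zero]
  linarith

lemma aux_xu2 (a lam c : ℕ → ℝ) (ha : ∀ k, 0 ≤ a k)
    (h0 : ∀ k, 0 ≤ lam k) (h1 : ∀ k, lam k ≤ 1)
    (hdiv : Tendsto (fun n => ∑ j ∈ range n, lam j) atTop atTop)
    (hc0 : ∀ k, 0 ≤ c k) (hc : Summable c)
    (hrec : ∀ k, a (k + 1) ≤ (1 - lam k) * a k + c k) :
    Tendsto a atTop (nhds 0) := by
  rw [Metric.tendsto_atTop]
  intro ε hε
  have htail : Tendsto (fun i => ∑' k, c (k + i)) atTop (nhds 0) := tendsto_sum_nat_add c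
  obtain ⟨N, hN⟩ := (htail.eventually_lt_const (by linarith : (0:ℝ) < ε/2)).exists_forall_of_atTop
  have hsum : ∀ n, ∑ j ∈ Finset.Ico N n, c j ≤ ∑' k, c (k + N) := by
    intro n
    rw [Finset.sum_Ico_eq_sum_range]
    have hsummable : Summable fun k => c (k + N) := (summable_nat_add_iff N).mpr hc
    calc ∑ k ∈ range (n - N), c (N + k)
        = ∑ k ∈ range (n - N), c (k + N) := by
          apply Finset.sum_congr rfl; intro k _; rw [Nat.add_comm]
      _ ≤ ∑' k, c (k + N) := Summable.sum_le_tsum _ (fun k _ => hc0 _) hsummable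
  have key : ∀ n, N ≤ n → a n ≤ a N * (∏ j ∈ Finset.Ico N n, (1 - lam j)) + ∑ j ∈ Finset.Ico N n, c j := by
    intro n hn
    induction n with
    | zero =>
      have hN0 : N = 0 := Nat.le_zero.mp hn
      subst hN0
      simp
    | succ n ih =>
      rcases Nat.lt_or_ge N (n + 1) with h | h
      · have hn' : N ≤ n := Nat.lt_succ_iff.mp h
        have ihn := ih hn'
        have hprod : ∏ j ∈ Finset.Ico N (n+1), (1 - lam j)
            = (∏ j ∈ Finset.Ico N n, (1 - lam j)) * (1 - lam n) :=
          Finset.prod_Ico_succ_top hn' _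
        have hcsum : ∑ j ∈ Finset.Ico N (n+1), c j
            = (∑ j ∈ Finset.Ico N n, c j) + c n := Finset.sum_Ico_succ_top hn' _
        have hpn : 0 ≤ ∏ j ∈ Finset.Ico N n, (1 - lam j) :=
          Finset.prod_nonneg fun j _ => by linarith [h1 j]
        have hcn : 0 ≤ ∑ j ∈ Finset.Ico N n, c j :=
          Finset.sum_nonneg fun j _ => hc0 j
        have h1n := h1 n; have h0n := h0 n; have haN := ha N
        calc a (n+1) ≤ (1 - lam n) * a n + c n := hrec n
          _ ≤ (1 - lam n) * (a N * (∏ j ∈ Finset.Ico N n, (1 - lam j)) + ∑ j ∈ Finset.Ico N n, c j) + c n := by nlinarith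
          _ ≤ a N * (∏ j ∈ Finset.Ico N (n+1), (1 - lam j)) + ∑ j ∈ Finset.Ico N (n+1), c j := by
              rw [hprod, hcsum]; nlinarith
      · have hNe : N = n + 1 := le_antisymm hn h
        subst hNe
        simp
  have hprod0 := aux_prod_zero lam h0 h1 hdiv N
  have : ∀ᶠ n in atTop, a N * ∏ j ∈ Finset.Ico N n, (1 - lam j) < ε / 2 := by
    have := (hprod0.const_mul (a N))
    simp only [mul_zero] at this
    exact this.eventually_lt_const (by linarith)
  rw [eventually_atTop] at this
  obtain ⟨M, hM⟩ := this
  refine ⟨max N M, fun n hn => ?_⟩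
  have h1' := key n (le_trans (le_max_left _ _) hn)
  have h2' := hM n (le_trans (le_max_right _ _) hn)
  have h3' := (hsum n).trans_lt (hN N (le_refl N))
  rw [Real.dist_eq]
  rw [abs_of_nonneg (by simp [ha n])]
  simp only [sub_zero]
  linarith
open Filter Finset RealInnerProductSpace

set_option maxHeartbeats 1000000 in
theorem stmt_19 {H : Type*} [NormedAddCommGroup H] [InnerProductSpace ℝ H] [CompleteSpace H]
    (D : Set H) (hne : D.Nonempty) (hcl : IsClosed D) (hconv : Convex ℝ D)
    (m : ℕ) (hm : 0 < m)
    (C : Fin m → Set H) (hCsub : ∀ i, C i ⊆ D)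
    (hCcl : ∀ i, IsClosed (C i)) (hCconv : ∀ i, Convex ℝ (C i))
    (hC : (⋂ i, C i).Nonempty)
    (P : Fin m → H → H)
    (hP : ∀ i, ∀ x, P i x ∈ C i ∧ ∀ z ∈ C i, ‖x - P i x‖ ≤ ‖x - z‖)
    (w : Fin m → ℝ) (hw : ∀ i, 0 < w i) (hw1 : ∑ i, w i = 1)
    (lam : ℕ → ℝ) (hlam01 : ∀ k, lam k ∈ Set.Icc (0 : ℝ) 1)
    (hlam0 : Filter.Tendsto lam Filter.atTop (nhds 0))
    (hlamdiv : ¬ Summable lam)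
    (hlamvar : Summable fun k => |lam (k + 1) - lam k|)
    (u : H) (hu : u ∈ D) (x : ℕ → H) (hx0 : x 0 = u)
    (hiter : ∀ k, x (k + 1) = lam k • u + (1 - lam k) • ∑ i, w i • P i (x k)) :
    ∃ p ∈ ⋂ i, C i, (∀ z ∈ ⋂ i, C i, ‖u - p‖ ≤ ‖u - z‖) ∧
      Filter.Tendsto x Filter.atTop (nhds p) := by
  classical
  have hl0 : ∀ k, 0 ≤ lam k := fun k => (hlam01 k).1
  have hl1 : ∀ k, lam k ≤ 1 := fun k => (hlam01 k).2
  have hdiv : Tendsto (fun n => ∑ j ∈ range n, lam j) atTop atTop :=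
    (not_summable_iff_tendsto_nat_atTop_of_nonneg hl0).mp hlamdiv
  -- variational inequality for the projections
  have hvar : ∀ (i) (y : H), ∀ z ∈ C i, ⟪y - P i y, z - P i y⟫ ≤ 0 := by
    intro i y z hz
    haveI : Nonempty (C i) := ⟨⟨P i y, (hP i y).1⟩⟩
    have hinf : ‖y - P i y‖ = ⨅ v : C i, ‖y - v‖ := by
      apply le_antisymm
      · exact le_ciInf fun v => (hP i y).2 v v.2
      · exact ciInf_le ⟨0, fun r hr => by
          rcases hr with ⟨v, rfl⟩; exact norm_nonneg _⟩ (⟨_, (hP i y).1⟩ : C i)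
    exact (norm_eq_iInf_iff_real_inner_le_zero (hCconv i) (hP i y).1).1 hinf z hz
  have hfirm : ∀ (i) (a b : H), ‖P i a - P i b‖ ^ 2 ≤ ⟪a - b, P i a - P i b⟫ := by
    intro i a b
    have h1 := hvar i a (P i b) (hP i b).1
    have h2 := hvar i b (P i a) (hP i a).1
    have hexp : ⟪a - b, P i a - P i b⟫ - ‖P i a - P i b‖ ^ 2
        = -⟪a - P i a, P i b - P i a⟫ - ⟪b - P i b, P i a - P i b⟫ := by
      rw [← real_inner_self_eq_norm_sq]
      simp only [inner_sub_left, inner_sub_right]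
      ring_nf
    nlinarith [hexp]
  have hnonexp : ∀ (i) (a b : H), ‖P i a - P i b‖ ≤ ‖a - b‖ := by
    intro i a b
    rcases eq_or_ne (P i a) (P i b) with h | h
    · simp [h]
    · have h1 := hfirm i a b
      have h2 := real_inner_le_norm (a - b) (P i a - P i b)
      have h3 : 0 < ‖P i a - P i b‖ := norm_pos_iff.mpr (sub_ne_zero.mpr h)
      nlinarith
  have hPfix : ∀ (i) (z : H), z ∈ C i → P i z = z := by
    intro i z hz
    have h1 := (hP i z).2 z hz
    simp only [sub_self, norm_zero] at h1
    have := norm_nonneg (z - P i z)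
    have h2 : ‖z - P i z‖ = 0 := le_antisymm h1 this
    have := norm_eq_zero.mp h2
    rw [sub_eq_zero] at this
    exact this.symm
  set T : H → H := fun y => ∑ i, w i • P i y with hTdef
  have hiter' : ∀ k, x (k + 1) = lam k • u + (1 - lam k) • T (x k) := hiter
  have hTnonexp : ∀ a b : H, ‖T a - T b‖ ≤ ‖a - b‖ := by
    intro a b
    have hδ : T a - T b = ∑ i, w i • (P i a - P i b) := by
      simp [hTdef, Finset.sum_sub_distrib, smul_sub]
    rw [hδ]
    calc ‖∑ i, w i • (P i a - P i b)‖ ≤ ∑ i, ‖w i • (P i a - P i b)‖ := norm_sum_le _ _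
      _ = ∑ i, w i * ‖P i a - P i b‖ := by
          refine Finset.sum_congr rfl fun i _ => ?_
          rw [norm_smul, Real.norm_eq_abs, abs_of_nonneg (hw i).le]
      _ ≤ ∑ i, w i * ‖a - b‖ :=
          Finset.sum_le_sum fun i _ => mul_le_mul_of_nonneg_left (hnonexp i a b) (hw i).le
      _ = ‖a - b‖ := by rw [← Finset.sum_mul, hw1, one_mul]
  have hTfix : ∀ z : H, z ∈ (⋂ i, C i) → T z = z := by
    intro z hz
    have : ∀ i : Fin m, P i z = z := fun i => hPfix i z (Set.mem_iInter.mp hz i)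
    simp only [hTdef, this, ← Finset.sum_smul, hw1, one_smul]
  obtain ⟨c0, hc0⟩ := hC
  have hfixonly : ∀ z : H, T z = z → z ∈ ⋂ i, C i := by
    intro z hz
    have hc0i : ∀ i : Fin m, c0 ∈ C i := Set.mem_iInter.mp hc0
    have h1 : ∀ i : Fin m, ‖P i z - c0‖ ^ 2 ≤ ⟪z - c0, P i z - c0⟫ := by
      intro i
      have := hfirm i z c0
      rwa [hPfix i c0 (hc0i i)] at this
    have hTz : ∑ i, w i • P i z = z := hz
    have hvbar : ∑ i, w i • (P i z - c0) = z - c0 := by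
      have hsplit : ∑ i, w i • (P i z - c0) = (∑ i, w i • P i z) - (∑ i, w i • c0) := by
        rw [← Finset.sum_sub_distrib]
        exact Finset.sum_congr rfl fun i _ => smul_sub _ _ _
      rw [hsplit, hTz, ← Finset.sum_smul, hw1, one_smul]
    have h2 : ∑ i, w i * ‖P i z - c0‖ ^ 2 ≤ ‖z - c0‖ ^ 2 := by
      calc ∑ i, w i * ‖P i z - c0‖ ^ 2
          ≤ ∑ i, w i * ⟪z - c0, P i z - c0⟫ :=
            Finset.sum_le_sum fun i _ => mul_le_mul_of_nonneg_left (h1 i) (hw i).le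
        _ = ⟪z - c0, ∑ i, w i • (P i z - c0)⟫ := by
            rw [inner_sum]
            exact Finset.sum_congr rfl fun i _ => (real_inner_smul_right _ _ _).symm
        _ = ‖z - c0‖ ^ 2 := by rw [hvbar, real_inner_self_eq_norm_sq]
    have h3 : ∑ i, w i * ‖P i z - z‖ ^ 2 ≤ 0 := by
      have hident : ∑ i, w i * ‖P i z - z‖ ^ 2
          = (∑ i, w i * ‖P i z - c0‖ ^ 2) - ‖z - c0‖ ^ 2 := by
        have hterm : ∀ i : Fin m, w i * ‖P i z - z‖ ^ 2
            = w i * ‖P i z - c0‖ ^ 2 - 2 * (w i * ⟪P i z - c0, z - c0⟫) + w i * ‖z - c0‖ ^ 2 := by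
          intro i
          have : P i z - z = (P i z - c0) - (z - c0) := by abel
          rw [this, norm_sub_sq_real]; ring
        rw [Finset.sum_congr rfl fun i _ => hterm i]
        rw [Finset.sum_add_distrib, Finset.sum_sub_distrib, ← Finset.mul_sum,
          ← Finset.sum_mul, hw1]
        have : ∑ i, w i * ⟪P i z - c0, z - c0⟫ = ⟪z - c0, z - c0⟫ := by
          calc ∑ i, w i * ⟪P i z - c0, z - c0⟫
              = ⟪∑ i, w i • (P i z - c0), z - c0⟫ := by
                rw [sum_inner]
                exact Finset.sum_congr rfl fun i _ => (real_inner_smul_left _ _ _).symm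
            _ = ⟪z - c0, z - c0⟫ := by rw [hvbar]
        rw [this, real_inner_self_eq_norm_sq]
        ring
      linarith
    have h4 : ∀ i : Fin m, P i z = z := by
      intro i
      by_contra hne'
      have hpos : 0 < w i * ‖P i z - z‖ ^ 2 := by
        have : 0 < ‖P i z - z‖ := norm_pos_iff.mpr (sub_ne_zero.mpr hne')
        exact mul_pos (hw i) (pow_pos this 2)
      have hnn : ∀ j ∈ Finset.univ, 0 ≤ w j * ‖P j z - z‖ ^ 2 :=
        fun j _ => mul_nonneg (hw j).le (sq_nonneg _)
      have := Finset.single_le_sum hnn (Finset.mem_univ i)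
      linarith
    exact Set.mem_iInter.mpr fun i => h4 i ▸ (hP i z).1
  -- the projection p of u onto the intersection
  have hCcl' : IsClosed (⋂ i, C i) := isClosed_iInter hCcl
  have hCconv' : Convex ℝ (⋂ i, C i) := convex_iInter fun i => hCconv i
  obtain ⟨p, hpC, hpinf⟩ :=
    exists_norm_eq_iInf_of_complete_convex ⟨c0, hc0⟩ hCcl'.isComplete hCconv' u
  have hpmin : ∀ z ∈ ⋂ i, C i, ‖u - p‖ ≤ ‖u - z‖ := by
    intro z hz
    rw [hpinf]
    exact ciInf_le ⟨0, fun r hr => by rcases hr with ⟨v, rfl⟩; exact norm_nonneg _⟩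
      (⟨z, hz⟩ : (⋂ i, C i))
  have hpvar : ∀ z ∈ ⋂ i, C i, ⟪u - p, z - p⟫ ≤ 0 :=
    (norm_eq_iInf_iff_real_inner_le_zero hCconv' hpC).1 hpinf
  have hTp : T p = p := hTfix p hpC
  set R : ℝ := ‖u - p‖ with hRdef
  have hR0 : 0 ≤ R := norm_nonneg _
  -- boundedness
  have hbound : ∀ k, ‖x k - p‖ ≤ R := by
    intro k
    induction k with
    | zero => rw [hx0]
    | succ k ih =>
      have hstep : x (k + 1) - p = lam k • (u - p) + (1 - lam k) • (T (x k) - p) := by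
        rw [hiter' k]; module
      have hT : ‖T (x k) - p‖ ≤ ‖x k - p‖ := by
        have h1 : ‖T (x k) - T p‖ ≤ ‖x k - p‖ := hTnonexp _ _
        rwa [hTp] at h1
      calc ‖x (k+1) - p‖ ≤ ‖lam k • (u - p)‖ + ‖(1 - lam k) • (T (x k) - p)‖ := by
            rw [hstep]; exact norm_add_le _ _
        _ = lam k * R + (1 - lam k) * ‖T (x k) - p‖ := by
            rw [norm_smul, norm_smul, Real.norm_eq_abs, Real.norm_eq_abs,
              abs_of_nonneg (hl0 k), abs_of_nonneg (by linarith [hl1 k] : 0 ≤ 1 - lam k)]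
        _ ≤ lam k * R + (1 - lam k) * R := by
            have h1 := hl0 k; have h2 := hl1 k
            nlinarith [hT.trans ih]
        _ = R := by ring
  have hxb : ∀ k, ‖x k‖ ≤ ‖p‖ + R := by
    intro k
    calc ‖x k‖ = ‖(x k - p) + p‖ := by rw [sub_add_cancel]
      _ ≤ ‖x k - p‖ + ‖p‖ := norm_add_le _ _
      _ ≤ ‖p‖ + R := by linarith [hbound k]
  have hTb : ∀ k, ‖T (x k) - p‖ ≤ R := by
    intro k
    have h1 : ‖T (x k) - T p‖ ≤ ‖x k - p‖ := hTnonexp _ _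
    rw [hTp] at h1
    exact h1.trans (hbound k)
  have huT : ∀ k, ‖u - T (x k)‖ ≤ 2 * R := by
    intro k
    calc ‖u - T (x k)‖ = ‖(u - p) - (T (x k) - p)‖ := by abel_nf
      _ ≤ ‖u - p‖ + ‖T (x k) - p‖ := norm_sub_le _ _
      _ ≤ 2 * R := by linarith [hTb k]
  -- asymptotic regularity
  have hdrec : ∀ k, ‖x (k + 2) - x (k + 1)‖
      ≤ (1 - lam (k + 1)) * ‖x (k + 1) - x k‖ + |lam (k + 1) - lam k| * (2 * R) := by
    intro k
    have hstep : x (k + 2) - x (k + 1)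
        = (lam (k + 1) - lam k) • (u - T (x k))
          + (1 - lam (k + 1)) • (T (x (k + 1)) - T (x k)) := by
      rw [hiter' (k + 1), hiter' k]; module
    calc ‖x (k + 2) - x (k + 1)‖
        ≤ ‖(lam (k + 1) - lam k) • (u - T (x k))‖
          + ‖(1 - lam (k + 1)) • (T (x (k + 1)) - T (x k))‖ := by
          rw [hstep]; exact norm_add_le _ _
      _ = |lam (k + 1) - lam k| * ‖u - T (x k)‖
          + (1 - lam (k + 1)) * ‖T (x (k + 1)) - T (x k)‖ := by
          rw [norm_smul, norm_smul, Real.norm_eq_abs, Real.norm_eq_abs,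
            abs_of_nonneg (by linarith [hl1 (k+1)] : 0 ≤ 1 - lam (k+1))]
      _ ≤ (1 - lam (k + 1)) * ‖x (k + 1) - x k‖ + |lam (k + 1) - lam k| * (2 * R) := by
          have h1 := mul_le_mul_of_nonneg_left (huT k) (abs_nonneg (lam (k+1) - lam k))
          have h2 := mul_le_mul_of_nonneg_left (hTnonexp (x (k+1)) (x k))
            (by linarith [hl1 (k+1)] : 0 ≤ 1 - lam (k+1))
          linarith
  have hdiv' : Tendsto (fun n => ∑ j ∈ range n, lam (j + 1)) atTop atTop := by
    have heq : ∀ n, ∑ j ∈ range n, lam (j + 1) = (∑ j ∈ range (n + 1), lam j) - lam 0 := by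
      intro n
      rw [Finset.sum_range_succ' (fun j => lam j) n]
      ring
    have : Tendsto (fun n => (∑ j ∈ range (n + 1), lam j) - lam 0) atTop atTop := by
      apply tendsto_atTop_add_const_right
      exact hdiv.comp (tendsto_add_atTop_nat 1)
    exact Tendsto.congr (fun n => (heq n).symm) this
  have hd : Tendsto (fun k => ‖x (k + 1) - x k‖) atTop (nhds 0) := by
    apply aux_xu2 (fun k => ‖x (k + 1) - x k‖) (fun k => lam (k + 1))
      (fun k => |lam (k + 1) - lam k| * (2 * R))
      (fun k => norm_nonneg _) (fun k => hl0 _) (fun k => hl1 _) hdiv'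
      (fun k => mul_nonneg (abs_nonneg _) (by linarith)) (hlamvar.mul_right _)
    exact hdrec
  have hs : Tendsto (fun k => ‖x k - T (x k)‖) atTop (nhds 0) := by
    apply squeeze_zero (fun k => norm_nonneg _)
      (g := fun k => ‖x (k + 1) - x k‖ + lam k * (2 * R))
    · intro k
      calc ‖x k - T (x k)‖ = ‖(x k - x (k + 1)) + (x (k + 1) - T (x k))‖ := by abel_nf
        _ ≤ ‖x k - x (k + 1)‖ + ‖x (k + 1) - T (x k)‖ := norm_add_le _ _
        _ ≤ ‖x (k + 1) - x k‖ + lam k * (2 * R) := by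
            have h1 : x (k + 1) - T (x k) = lam k • (u - T (x k)) := by
              rw [hiter' k]; module
            rw [norm_sub_rev (x k), h1, norm_smul, Real.norm_eq_abs, abs_of_nonneg (hl0 k)]
            have := mul_le_mul_of_nonneg_left (huT k) (hl0 k)
            linarith
    · have : Tendsto (fun k => lam k * (2 * R)) atTop (nhds 0) := by
        simpa using hlam0.mul_const (2 * R)
      simpa using hd.add this
  -- the key limsup property
  set g : ℕ → ℝ := fun k => ⟪u - p, x k - p⟫ with hgdef
  have hg : ∀ ε > 0, ∀ᶠ k in atTop, g k ≤ ε := by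
    by_contra hcon
    push_neg at hcon
    obtain ⟨ε, hε, hfreq⟩ := hcon
    replace hfreq : ∃ᶠ k in atTop, ¬ g k ≤ ε := hfreq.mono fun k hk => not_le.mpr hk
    have hNB : (atTop ⊓ 𝓟 {k | ¬ g k ≤ ε}).NeBot := frequently_iff_neBot.mp hfreq
    set U : Ultrafilter ℕ := Ultrafilter.of (atTop ⊓ 𝓟 {k | ¬ g k ≤ ε}) with hUdef
    have hUle : (U : Filter ℕ) ≤ atTop ⊓ 𝓟 {k | ¬ g k ≤ ε} := Ultrafilter.of_le _
    have hU1 : (U : Filter ℕ) ≤ atTop := hUle.trans inf_le_left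
    have hU2 : ∀ᶠ k in (U : Filter ℕ), ¬ g k ≤ ε :=
      le_principal_iff.mp (hUle.trans inf_le_right)
    have hUlim : ∀ (f : ℕ → ℝ) (B : ℝ), (∀ k, |f k| ≤ B) → ∃ a, Tendsto f ↑U (nhds a) := by
      intro f B hB
      have hle : ↑(U.map f) ≤ 𝓟 (Set.Icc (-B) B) := by
        rw [Ultrafilter.coe_map, le_principal_iff, Filter.mem_map]
        exact univ_mem' fun k => Set.mem_Icc.mpr (abs_le.mp (hB k))
      obtain ⟨a, _, ha⟩ := isCompact_Icc.ultrafilter_le_nhds (U.map f) hle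
      exact ⟨a, by rw [Tendsto, ← Ultrafilter.coe_map]; exact ha⟩
    have hB : ∀ z : H, ∀ k, |⟪z, x k⟫| ≤ ‖z‖ * (‖p‖ + R) := fun z k =>
      (abs_real_inner_le_norm z (x k)).trans (mul_le_mul_of_nonneg_left (hxb k) (norm_nonneg z))
    choose ℓ hℓ using fun z : H => hUlim (fun k => ⟪z, x k⟫) (‖z‖ * (‖p‖ + R)) (hB z)
    have hadd : ∀ y z : H, ℓ (y + z) = ℓ y + ℓ z := by
      intro y z
      have h2 : Tendsto (fun k => ⟪y + z, x k⟫) ↑U (nhds (ℓ y + ℓ z)) := by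
        simpa [inner_add_left] using (hℓ y).add (hℓ z)
      exact tendsto_nhds_unique (hℓ (y + z)) h2
    have hsmul : ∀ (r : ℝ) (z : H), ℓ (r • z) = r * ℓ z := by
      intro r z
      have h2 : Tendsto (fun k => ⟪r • z, x k⟫) ↑U (nhds (r * ℓ z)) := by
        simpa [real_inner_smul_left] using (hℓ z).const_mul r
      exact tendsto_nhds_unique (hℓ (r • z)) h2
    have hbnd : ∀ z : H, ‖ℓ z‖ ≤ (‖p‖ + R) * ‖z‖ := by
      intro z
      rw [Real.norm_eq_abs]
      have h1 : Tendsto (fun k => |⟪z, x k⟫|) ↑U (nhds |ℓ z|) := (hℓ z).abs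
      have h2 := le_of_tendsto h1 (Filter.Eventually.of_forall (hB z))
      linarith [h2]
    obtain ⟨c, hcz⟩ : ∃ c : H, ∀ z : H, ⟪z, c⟫ = ℓ z := by
      refine ⟨(InnerProductSpace.toDual ℝ H).symm (LinearMap.mkContinuous
        { toFun := ℓ, map_add' := hadd, map_smul' := hsmul } (‖p‖ + R) hbnd), fun z => ?_⟩
      rw [real_inner_comm]
      exact InnerProductSpace.toDual_symm_apply
    have hweak : ∀ z : H, Tendsto (fun k => ⟪z, x k - c⟫) ↑U (nhds 0) := by
      intro z
      have h1 := (hℓ z).sub_const (ℓ z)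
      rw [sub_self] at h1
      refine h1.congr fun k => ?_
      rw [inner_sub_right, hcz]
    obtain ⟨γ, hγ⟩ := hUlim (fun k => ‖x k - c‖) (‖p‖ + R + ‖c‖) (by
      intro k
      rw [abs_of_nonneg (norm_nonneg _)]
      calc ‖x k - c‖ ≤ ‖x k‖ + ‖c‖ := norm_sub_le _ _
        _ ≤ ‖p‖ + R + ‖c‖ := by linarith [hxb k])
    have hsU : Tendsto (fun k => ‖x k - T (x k)‖) ↑U (nhds 0) := hs.mono_left hU1
    have hlhs : Tendsto (fun k => ‖x k - T c‖ ^ 2) ↑U (nhds (γ ^ 2 + ‖c - T c‖ ^ 2)) := by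
      have hexp : ∀ k, ‖x k - T c‖ ^ 2
          = ‖x k - c‖ ^ 2 + 2 * ⟪c - T c, x k - c⟫ + ‖c - T c‖ ^ 2 := by
        intro k
        have hsplit : x k - T c = (x k - c) + (c - T c) := by abel
        rw [hsplit, norm_add_sq_real, real_inner_comm]
      have h1 : Tendsto (fun k => ‖x k - c‖ ^ 2 + 2 * ⟪c - T c, x k - c⟫ + ‖c - T c‖ ^ 2) ↑U
          (nhds ((γ ^ 2 + 2 * 0) + ‖c - T c‖ ^ 2)) :=
        ((hγ.pow 2).add ((hweak (c - T c)).const_mul 2)).add tendsto_const_nhds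
      have h2 := h1.congr fun k => (hexp k).symm
      simpa using h2
    have hrhs : Tendsto (fun k => (‖x k - T (x k)‖ + ‖x k - c‖) ^ 2) ↑U (nhds ((0 + γ) ^ 2)) :=
      (hsU.add hγ).pow 2
    have hle2 : ∀ k, ‖x k - T c‖ ^ 2 ≤ (‖x k - T (x k)‖ + ‖x k - c‖) ^ 2 := by
      intro k
      have h1 : ‖x k - T c‖ ≤ ‖x k - T (x k)‖ + ‖x k - c‖ := by
        have hsplit : x k - T c = (x k - T (x k)) + (T (x k) - T c) := by abel
        calc ‖x k - T c‖ ≤ ‖x k - T (x k)‖ + ‖T (x k) - T c‖ := by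
              rw [hsplit]; exact norm_add_le _ _
          _ ≤ _ := by linarith [hTnonexp (x k) c]
      exact pow_le_pow_left₀ (norm_nonneg _) h1 2
    have hfin : γ ^ 2 + ‖c - T c‖ ^ 2 ≤ (0 + γ) ^ 2 :=
      le_of_tendsto_of_tendsto' hlhs hrhs hle2
    have hTc : T c = c := by
      have h1 : ‖c - T c‖ ^ 2 ≤ 0 := by nlinarith [hfin]
      have h0 : ‖c - T c‖ = 0 := by nlinarith [sq_nonneg ‖c - T c‖, norm_nonneg (c - T c)]
      have h2 := norm_eq_zero.mp h0
      rw [sub_eq_zero] at h2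
      exact h2.symm
    have hcC : c ∈ ⋂ i, C i := hfixonly c hTc
    have hglim : Tendsto g ↑U (nhds (0 + ⟪u - p, c - p⟫)) := by
      have h1 := (hweak (u - p)).add (tendsto_const_nhds (x := ⟪u - p, c - p⟫))
      refine h1.congr fun k => ?_
      rw [hgdef]
      rw [← inner_add_right]
      congr 1
      abel
    have hεle : ε ≤ 0 + ⟪u - p, c - p⟫ :=
      ge_of_tendsto hglim (hU2.mono fun k hk => (not_le.mp hk).le)
    have hfinal := hpvar c hcC
    linarith
  -- final recurrence and conclusion
  have hrec : ∀ k, ‖x (k + 1) - p‖ ^ 2 ≤ (1 - lam k) * ‖x k - p‖ ^ 2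
      + lam k * (lam k * R ^ 2 + 2 * (1 - lam k) * ⟪u - p, T (x k) - p⟫) := by
    intro k
    have hstep : x (k + 1) - p = lam k • (u - p) + (1 - lam k) • (T (x k) - p) := by
      rw [hiter' k]; module
    have hlk : 0 ≤ 1 - lam k := by linarith [hl1 k]
    have hexp : ‖x (k + 1) - p‖ ^ 2 = (lam k) ^ 2 * R ^ 2
        + 2 * (lam k * (1 - lam k) * ⟪u - p, T (x k) - p⟫)
        + (1 - lam k) ^ 2 * ‖T (x k) - p‖ ^ 2 := by
      rw [hstep, norm_add_sq_real, norm_smul, norm_smul, real_inner_smul_left,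
        real_inner_smul_right, Real.norm_eq_abs, Real.norm_eq_abs,
        abs_of_nonneg (hl0 k), abs_of_nonneg hlk, mul_pow, mul_pow]
      ring
    have hT1 : ‖T (x k) - T p‖ ≤ ‖x k - p‖ := hTnonexp _ _
    rw [hTp] at hT1
    have hT2 : ‖T (x k) - p‖ ^ 2 ≤ ‖x k - p‖ ^ 2 := pow_le_pow_left₀ (norm_nonneg _) hT1 2
    have e0 : (1 - lam k) ^ 2 ≤ (1 - lam k) := by nlinarith [hl0 k, hl1 k]
    have e1 : (1 - lam k) ^ 2 * ‖T (x k) - p‖ ^ 2 ≤ (1 - lam k) * ‖x k - p‖ ^ 2 :=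
      calc (1 - lam k) ^ 2 * ‖T (x k) - p‖ ^ 2 ≤ (1 - lam k) * ‖T (x k) - p‖ ^ 2 :=
            mul_le_mul_of_nonneg_right e0 (sq_nonneg _)
        _ ≤ (1 - lam k) * ‖x k - p‖ ^ 2 := mul_le_mul_of_nonneg_left hT2 hlk
    rw [hexp]
    linarith [e1]
  have hbev : ∀ ε > 0, ∀ᶠ k in atTop,
      lam k * R ^ 2 + 2 * (1 - lam k) * ⟪u - p, T (x k) - p⟫ ≤ ε := by
    intro ε hε
    have h1 : ∀ᶠ k in atTop, lam k * R ^ 2 < ε / 2 := by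
      have := hlam0.mul_const (R ^ 2)
      simp only [zero_mul] at this
      exact this.eventually_lt_const (by linarith)
    have h3 : ∀ᶠ k in atTop, ‖x k - T (x k)‖ * R < ε / 8 := by
      have := hs.mul_const R
      simp only [zero_mul] at this
      exact this.eventually_lt_const (by linarith)
    filter_upwards [h1, hg (ε / 8) (by linarith), h3] with k hk1 hk2 hk3
    have hlk : 0 ≤ 1 - lam k := by linarith [hl1 k]
    have hip : ⟪u - p, T (x k) - p⟫ ≤ ε / 4 := by
      have hsplit : ⟪u - p, T (x k) - p⟫ = ⟪u - p, T (x k) - x k⟫ + g k := by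
        rw [hgdef, ← inner_add_right]
        congr 1
        abel
      have hCS : ⟪u - p, T (x k) - x k⟫ ≤ ‖x k - T (x k)‖ * R := by
        have h4 := real_inner_le_norm (u - p) (T (x k) - x k)
        rw [norm_sub_rev (T (x k))] at h4
        calc ⟪u - p, T (x k) - x k⟫ ≤ ‖u - p‖ * ‖x k - T (x k)‖ := h4
          _ = ‖x k - T (x k)‖ * R := by rw [hRdef]; ring
      rw [hsplit]
      linarith
    have h2' : 2 * (1 - lam k) * ⟪u - p, T (x k) - p⟫ ≤ ε / 2 := by
      rcases le_or_gt (⟪u - p, T (x k) - p⟫ : ℝ) 0 with h | h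
      · nlinarith
      · nlinarith [hl0 k, hl1 k]
    linarith
  have ha0 : Tendsto (fun k => ‖x k - p‖ ^ 2) atTop (nhds 0) :=
    aux_xu _ lam _ (fun k => sq_nonneg _) hl0 hl1 hdiv hbev hrec
  have hxp : Tendsto (fun k => ‖x k - p‖) atTop (nhds 0) := by
    have h1 := ha0.sqrt
    rw [Real.sqrt_zero] at h1
    refine h1.congr fun k => Real.sqrt_sq (norm_nonneg _)
  refine ⟨p, hpC, hpmin, ?_⟩
  exact tendsto_iff_norm_sub_tendsto_zero.mpr hxp
end
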